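/- arXiv:math/0510211 — 10 statements merged into one kernel-verified Lean document; each statement's English description precedes it below -/
import Mathlib

section
/- A pair of sequences (P,M) with P=(p_1,...,p_r) and M=(m_1,...,m_r) is the left-to-right-maximum specification of some permutation of [n] if and only if 1=p_1<p_2<...<p_r≤n, 1≤m_1<m_2<...<m_r=n, m_i≥p_i for all i, and p_{i+1}≤m_i+1 for 1≤i≤r-1. -/
def IsLRmax {n : ℕ} (π : Equiv.Perm (Fin n)) (p : Fin n) : Prop :=
  ∀ q, q < p → π q < π p

/-- (P, M) is the LRmax specification of π : P lists (in increasing order)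
the positions of the left-to-right maxima and M the corresponding values. -/
def IsLRmaxSpec {n r : ℕ} (π : Equiv.Perm (Fin n)) (P M : Fin r → Fin n) : Prop :=
  StrictMono P ∧ (∀ p, IsLRmax π p ↔ ∃ i, P i = p) ∧ ∀ i, π (P i) = M i

/-- Every prefix maximum is attained at a left-to-right maximum. -/
private lemma exists_lrmax {n : ℕ} (π : Equiv.Perm (Fin n)) :
    ∀ q : Fin n, ∃ p, p ≤ q ∧ IsLRmax π p ∧ π q ≤ π p := by
  have H : ∀ m : ℕ, ∀ q : Fin n, (q : ℕ) ≤ m → ∃ p, p ≤ q ∧ IsLRmax π p ∧ π q ≤ π p := by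
    intro m
    induction m with
    | zero =>
      intro q hq
      refine ⟨q, le_rfl, fun q' hq' => ?_, le_rfl⟩
      exfalso
      have : (q' : ℕ) < (q : ℕ) := hq'
      omega
    | succ m ih =>
      intro q hq
      by_cases h : IsLRmax π q
      · exact ⟨q, le_rfl, h, le_rfl⟩
      · simp only [IsLRmax, not_forall] at h
        obtain ⟨q', hq', hle⟩ := h
        have hq'm : (q' : ℕ) ≤ m := by
          have : (q' : ℕ) < (q : ℕ) := hq'
          omega
        obtain ⟨p, h1, h2, h3⟩ := ih q' hq'm
        exact ⟨p, h1.trans hq'.le, h2, (not_lt.mp hle).trans h3⟩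
  intro q
  exact H q q le_rfl

private lemma aux_card_filter_le {n m : ℕ} {A : Finset (Fin n)} (hA : A.card = m) (k : Fin m) :
    (A.filter (fun x => x ≤ (A.orderIsoOfFin hA k : Fin n))).card = (k : ℕ) + 1 := by
  have himg : A.filter (fun x => x ≤ (A.orderIsoOfFin hA k : Fin n))
      = (Finset.Iic k).image (fun j => (A.orderIsoOfFin hA j : Fin n)) := by
    ext x
    simp only [Finset.mem_filter, Finset.mem_image, Finset.mem_Iic]
    constructor
    · rintro ⟨hxA, hxle⟩
      refine ⟨(A.orderIsoOfFin hA).symm ⟨x, hxA⟩, ?_, by simp⟩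
      have h2 : (A.orderIsoOfFin hA) ((A.orderIsoOfFin hA).symm ⟨x, hxA⟩)
          ≤ (A.orderIsoOfFin hA) k := by
        rw [OrderIso.apply_symm_apply]
        exact Subtype.coe_le_coe.mp hxle
      exact (A.orderIsoOfFin hA).le_iff_le.mp h2
    · rintro ⟨j, hj, rfl⟩
      exact ⟨(A.orderIsoOfFin hA j).2,
        Subtype.coe_le_coe.mpr ((A.orderIsoOfFin hA).le_iff_le.mpr hj)⟩
  rw [himg, Finset.card_image_of_injective _
    (fun a b hab => (A.orderIsoOfFin hA).injective (Subtype.coe_injective hab)), Fin.card_Iic]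

private lemma aux_enum_lt {n m : ℕ} {B : Finset (Fin n)} (hB : B.card = m) (k : Fin m) (b : Fin n)
    (hcount : (k : ℕ) < (B.filter (fun x => x < b)).card) :
    (B.orderIsoOfFin hB k : Fin n) < b := by
  by_contra hcon
  push_neg at hcon
  have hsub : B.filter (fun x => x < b)
      ⊆ (Finset.Iio k).image (fun j => (B.orderIsoOfFin hB j : Fin n)) := by
    intro s hs
    rw [Finset.mem_filter] at hs
    obtain ⟨hsB, hsb⟩ := hs
    refine Finset.mem_image.mpr ⟨(B.orderIsoOfFin hB).symm ⟨s, hsB⟩, Finset.mem_Iio.mpr ?_, by simp⟩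
    have h2 : (B.orderIsoOfFin hB) ((B.orderIsoOfFin hB).symm ⟨s, hsB⟩)
        < (B.orderIsoOfFin hB) k := by
      rw [OrderIso.apply_symm_apply]
      exact Subtype.coe_lt_coe.mp (lt_of_lt_of_le hsb hcon)
    exact (B.orderIsoOfFin hB).lt_iff_lt.mp h2
  have := (Finset.card_le_card hsub).trans (Finset.card_image_le.trans_eq (Fin.card_Iio k))
  omega

theorem stmt1 (n r : ℕ) (hn : 0 < n) (hr : 0 < r) (P M : Fin r → Fin n) :
    (∃ π : Equiv.Perm (Fin n), IsLRmaxSpec π P M) ↔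
      (StrictMono P ∧ StrictMono M ∧
        P ⟨0, hr⟩ = ⟨0, hn⟩ ∧
        (M ⟨r - 1, Nat.sub_lt hr one_pos⟩ : ℕ) = n - 1 ∧
        (∀ i, P i ≤ M i) ∧
        ∀ i : ℕ, ∀ h : i + 1 < r,
          (P ⟨i + 1, h⟩ : ℕ) ≤ (M ⟨i, Nat.lt_of_succ_lt h⟩ : ℕ) + 1) := by
  constructor
  · rintro ⟨π, hP, hLR, hπM⟩
    have hlr : ∀ i, IsLRmax π (P i) := fun i => (hLR (P i)).mpr ⟨i, rfl⟩
    have hM : StrictMono M := by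
      intro i j hij
      rw [← hπM i, ← hπM j]
      exact hlr j (P i) (hP hij)
    refine ⟨hP, hM, ?_, ?_, ?_, ?_⟩
    · -- P 0 = 0
      have h0 : IsLRmax π ⟨0, hn⟩ := by
        intro q hq
        exfalso
        have : (q : ℕ) < 0 := hq
        omega
      obtain ⟨i, hi⟩ := (hLR _).mp h0
      have h1 : P ⟨0, hr⟩ ≤ P i := hP.monotone (by simp [Fin.le_def])
      rw [hi] at h1
      exact le_antisymm h1 (by simp [Fin.le_def])
    · -- M last = n - 1
      set z : Fin n := ⟨n - 1, Nat.sub_lt hn one_pos⟩ with hz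
      have hzmax : IsLRmax π (π.symm z) := by
        intro q hq
        rw [Equiv.apply_symm_apply]
        have h1 : (π q : ℕ) ≤ n - 1 := by
          have := (π q).2
          omega
        have h2 : π q ≠ z := by
          intro hcon
          have : q = π.symm z := by
            rw [← hcon, Equiv.symm_apply_apply]
          rw [this] at hq
          exact lt_irrefl _ hq
        exact lt_of_le_of_ne (by exact h1) h2
      obtain ⟨i, hi⟩ := (hLR _).mp hzmax
      have hMi : M i = z := by rw [← hπM i, hi, Equiv.apply_symm_apply]
      have h1 : M i ≤ M ⟨r - 1, Nat.sub_lt hr one_pos⟩ := by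
        apply hM.monotone
        have := i.2
        simp [Fin.le_def]
        omega
      have h2 : (M ⟨r - 1, Nat.sub_lt hr one_pos⟩ : ℕ) ≤ n - 1 := by
        have := (M ⟨r - 1, Nat.sub_lt hr one_pos⟩).2
        omega
      rw [hMi] at h1
      have h3 : (n - 1 : ℕ) ≤ (M ⟨r - 1, Nat.sub_lt hr one_pos⟩ : ℕ) := h1
      omega
    · -- P i ≤ M i
      intro i
      have hbound : ∀ k : Fin ((P i : ℕ) + 1), (π ⟨(k : ℕ), by have := (P i).2; omega⟩ : ℕ)
          ≤ (M i : ℕ) := by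
        intro k
        set qk : Fin n := ⟨(k : ℕ), by have := (P i).2; omega⟩ with hqk
        rcases lt_or_eq_of_le (Nat.le_of_lt_succ k.2) with h | h
        · have : π qk < π (P i) := hlr i qk h
          rw [hπM i] at this
          exact le_of_lt this
        · have : qk = P i := Fin.ext h
          rw [this, hπM i]
      set g : Fin ((P i : ℕ) + 1) → Fin ((M i : ℕ) + 1) :=
        fun k => ⟨(π ⟨(k : ℕ), by have := (P i).2; omega⟩ : ℕ),
          Nat.lt_succ_of_le (hbound k)⟩ with hg
      have hginj : Function.Injective g := by
        intro a b hab
        simp only [hg, Fin.mk.injEq] at hab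
        have h2 := π.injective (Fin.ext hab)
        have h3 : (a : ℕ) = (b : ℕ) := by
          have := congrArg Fin.val h2
          simpa using this
        exact Fin.ext h3
      have := Fintype.card_le_of_injective g hginj
      simp only [Fintype.card_fin] at this
      rw [Fin.le_def]
      omega
    · -- P (i+1) ≤ M i + 1
      intro i h
      have hbound : ∀ k : Fin ((P ⟨i + 1, h⟩ : ℕ)),
          (π ⟨(k : ℕ), by have := (P ⟨i + 1, h⟩).2; omega⟩ : ℕ)
          ≤ (M ⟨i, Nat.lt_of_succ_lt h⟩ : ℕ) := by
        intro k
        set qk : Fin n := ⟨(k : ℕ), by have := (P ⟨i + 1, h⟩).2; omega⟩ with hqk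
        obtain ⟨p, hp1, hp2, hp3⟩ := exists_lrmax π qk
        obtain ⟨j, hj⟩ := (hLR p).mp hp2
        have hjlt : j ≤ ⟨i, Nat.lt_of_succ_lt h⟩ := by
          by_contra hcon
          push_neg at hcon
          have hji : (⟨i + 1, h⟩ : Fin r) ≤ j := by
            simp only [Fin.le_def]
            have : (i : ℕ) < (j : ℕ) := hcon
            omega
          have : P ⟨i + 1, h⟩ ≤ P j := hP.monotone hji
          rw [hj] at this
          have h5 : p ≤ qk := hp1
          have h6 : (qk : ℕ) < (P ⟨i + 1, h⟩ : ℕ) := k.2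
          have h7 : (P ⟨i + 1, h⟩ : ℕ) ≤ (p : ℕ) := this
          have h8 : (p : ℕ) ≤ (qk : ℕ) := h5
          omega
        have h9 : π p = M j := by rw [← hj, hπM]
        calc (π qk : ℕ) ≤ (π p : ℕ) := hp3
          _ = (M j : ℕ) := by rw [h9]
          _ ≤ (M ⟨i, Nat.lt_of_succ_lt h⟩ : ℕ) := hM.monotone hjlt
      set g : Fin ((P ⟨i + 1, h⟩ : ℕ)) → Fin ((M ⟨i, Nat.lt_of_succ_lt h⟩ : ℕ) + 1) :=
        fun k => ⟨(π ⟨(k : ℕ), by have := (P ⟨i + 1, h⟩).2; omega⟩ : ℕ),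
          Nat.lt_succ_of_le (hbound k)⟩ with hg
      have hginj : Function.Injective g := by
        intro a b hab
        simp only [hg, Fin.mk.injEq] at hab
        have h2 := π.injective (Fin.ext hab)
        have h3 : (a : ℕ) = (b : ℕ) := by
          have := congrArg Fin.val h2
          simpa using this
        exact Fin.ext h3
      have := Fintype.card_le_of_injective g hginj
      simpa using this
  · rintro ⟨hP, hM, hP0, hMl, hPM, hgap⟩
    classical
    set T : Finset (Fin n) := Finset.image P Finset.univ with hTdef
    set S : Finset (Fin n) := Finset.image M Finset.univ with hSdef
    have hTcard : T.card = r := by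
      rw [hTdef, Finset.card_image_of_injective _ hP.injective, Finset.card_univ,
        Fintype.card_fin]
    have hScard : S.card = r := by
      rw [hSdef, Finset.card_image_of_injective _ hM.injective, Finset.card_univ,
        Fintype.card_fin]
    have hTc : Tᶜ.card = n - r := by rw [Finset.card_compl, hTcard, Fintype.card_fin]
    have hSc : Sᶜ.card = n - r := by rw [Finset.card_compl, hScard, Fintype.card_fin]
    set eP : Fin r ≃o {x // x ∈ T} := T.orderIsoOfFin hTcard with hePdef
    set eT : Fin (n - r) ≃o {x // x ∈ Tᶜ} := Tᶜ.orderIsoOfFin hTc with heTdef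
    set eS : Fin (n - r) ≃o {x // x ∈ Sᶜ} := Sᶜ.orderIsoOfFin hSc with heSdef
    have hmemT : ∀ q : Fin n, q ∈ T ↔ ∃ i, P i = q := by
      intro q
      simp [hTdef]
    have hePP : ∀ i, (eP i : Fin n) = P i := by
      have huniq := Finset.orderEmbOfFin_unique hTcard (f := P)
        (fun x => Finset.mem_image_of_mem _ (Finset.mem_univ x)) hP
      intro i
      have : (eP i : Fin n) = T.orderEmbOfFin hTcard i := rfl
      rw [this, ← huniq]
    set f : Fin n → Fin n := fun q =>
      if hq : q ∈ T then M (eP.symm ⟨q, hq⟩)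
      else (eS (eT.symm ⟨q, Finset.mem_compl.mpr hq⟩) : Fin n) with hfdef
    have hfP : ∀ i, f (P i) = M i := by
      intro i
      have hmem : P i ∈ T := Finset.mem_image_of_mem _ (Finset.mem_univ i)
      rw [hfdef]
      simp only [dif_pos hmem]
      congr 1
      have : eP i = ⟨P i, hmem⟩ := Subtype.ext (hePP i)
      rw [← this, OrderIso.symm_apply_apply]
    have hfC : ∀ q (hq : q ∉ T),
        f q = (eS (eT.symm ⟨q, Finset.mem_compl.mpr hq⟩) : Fin n) := by
      intro q hq
      rw [hfdef]
      simp only [dif_neg hq]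
    have hfS : ∀ q, q ∉ T → f q ∈ Sᶜ := by
      intro q hq
      rw [hfC q hq]
      exact (eS _).2
    have hinj : Function.Injective f := by
      intro a b hab
      by_cases ha : a ∈ T <;> by_cases hb : b ∈ T
      · rw [hfdef] at hab
        simp only [dif_pos ha, dif_pos hb] at hab
        have h1 := eP.symm.injective (hM.injective hab)
        exact congrArg Subtype.val h1
      · exfalso
        have h1 : f a ∈ S := by
          rw [hfdef]
          simp only [dif_pos ha]
          exact Finset.mem_image_of_mem _ (Finset.mem_univ _)
        have h2 := hfS b hb
        rw [← hab] at h2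
        exact (Finset.mem_compl.mp h2) h1
      · exfalso
        have h1 : f b ∈ S := by
          rw [hfdef]
          simp only [dif_pos hb]
          exact Finset.mem_image_of_mem _ (Finset.mem_univ _)
        have h2 := hfS a ha
        rw [hab] at h2
        exact (Finset.mem_compl.mp h2) h1
      · rw [hfC a ha, hfC b hb] at hab
        have h1 := eT.symm.injective (eS.injective (Subtype.coe_injective hab))
        exact congrArg Subtype.val h1
    have hbij : Function.Bijective f := Finite.injective_iff_bijective.mp hinj
    set π : Equiv.Perm (Fin n) := Equiv.ofBijective f hbij with hπdef
    have hπ : ∀ q, π q = f q := fun q => rfl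
    -- every q outside T has a largest P i below it, with q ≤ M i
    have hqpos : ∀ q : Fin n, q ∉ T → P ⟨0, hr⟩ < q := by
      intro q hq
      rcases lt_or_eq_of_le (show P ⟨0, hr⟩ ≤ q by rw [hP0]; simp [Fin.le_def]) with h | h
      · exact h
      · exact absurd ((hmemT q).mpr ⟨⟨0, hr⟩, h⟩) hq
    have hlastIdx : ∀ q : Fin n, q ∉ T →
        ∃ i : Fin r, P i < q ∧ (q : ℕ) ≤ (M i : ℕ) ∧ ∀ j, P j < q → j ≤ i := by
      intro q hq
      set F := Finset.univ.filter (fun j : Fin r => P j < q) with hF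
      have hFne : F.Nonempty := ⟨⟨0, hr⟩, by simp [hF, hqpos q hq]⟩
      set i := F.max' hFne with hi
      have hiF : i ∈ F := F.max'_mem hFne
      have hPi : P i < q := by
        have := Finset.mem_filter.mp hiF
        exact this.2
      have hmax : ∀ j, P j < q → j ≤ i := fun j hj =>
        F.le_max' j (Finset.mem_filter.mpr ⟨Finset.mem_univ _, hj⟩)
      refine ⟨i, hPi, ?_, hmax⟩
      by_cases hi1 : (i : ℕ) + 1 < r
      · have h1 : ¬ P ⟨(i : ℕ) + 1, hi1⟩ < q := by
          intro hcon
          have := hmax _ hcon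
          have h2 : (i : ℕ) + 1 ≤ (i : ℕ) := this
          omega
        have h2 : q ≠ P ⟨(i : ℕ) + 1, hi1⟩ := by
          intro hcon
          exact hq ((hmemT q).mpr ⟨_, hcon.symm⟩)
        have h3 : q < P ⟨(i : ℕ) + 1, hi1⟩ := lt_of_le_of_ne (not_lt.mp h1) h2
        have h4 := hgap (i : ℕ) hi1
        have h5 : (⟨(i : ℕ), Nat.lt_of_succ_lt hi1⟩ : Fin r) = i := Fin.ext rfl
        rw [h5] at h4
        have h6 : (q : ℕ) < (P ⟨(i : ℕ) + 1, hi1⟩ : ℕ) := h3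
        omega
      · have hir : (i : ℕ) = r - 1 := by
          have := i.2
          omega
        have h5 : (⟨r - 1, Nat.sub_lt hr one_pos⟩ : Fin r) = i := Fin.ext hir.symm
        rw [← h5]
        rw [hMl]
        have := q.2
        omega
    -- the key counting claim
    have claimC : ∀ q (hq : q ∉ T) (i : Fin r), P i < q → (q : ℕ) ≤ (M i : ℕ) →
        (∀ j, P j < q → j ≤ i) → f q < M i := by
      intro q hq i hPiq hqM hmax
      set k : Fin (n - r) := eT.symm ⟨q, Finset.mem_compl.mpr hq⟩ with hk
      have hkq : (eT k : Fin n) = q := by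
        rw [hk, OrderIso.apply_symm_apply]
      have hcard1 : (Tᶜ.filter (fun x => x ≤ q)).card = (k : ℕ) + 1 := by
        have := aux_card_filter_le hTc k
        rw [show (Tᶜ.orderIsoOfFin hTc k : Fin n) = (eT k : Fin n) from rfl, hkq] at this
        exact this
      -- T ∩ [0, q] has at least i + 1 elements
      have hcard2 : (i : ℕ) + 1 ≤ (T.filter (fun x => x ≤ q)).card := by
        have hsub : (Finset.Iic i).image P ⊆ T.filter (fun x => x ≤ q) := by
          intro x hx
          obtain ⟨j, hj, rfl⟩ := Finset.mem_image.mp hx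
          rw [Finset.mem_Iic] at hj
          refine Finset.mem_filter.mpr ⟨Finset.mem_image_of_mem _ (Finset.mem_univ _), ?_⟩
          exact le_trans (hP.monotone hj) (le_of_lt hPiq)
        have h1 := Finset.card_le_card hsub
        rw [Finset.card_image_of_injective _ hP.injective, Fin.card_Iic] at h1
        exact h1
      -- total count below q
      have hcard3 : (T.filter (fun x => x ≤ q)).card + (Tᶜ.filter (fun x => x ≤ q)).card
          = (q : ℕ) + 1 := by
        have h1 : (Finset.Iic q).filter (fun x => x ∈ T) = T.filter (fun x => x ≤ q) := by
          ext x
          simp only [Finset.mem_filter, Finset.mem_Iic]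
          tauto
        have h2 : (Finset.Iic q).filter (fun x => ¬ x ∈ T) = Tᶜ.filter (fun x => x ≤ q) := by
          ext x
          simp only [Finset.mem_filter, Finset.mem_Iic, Finset.mem_compl]
          tauto
        have h3 := Finset.card_filter_add_card_filter_not
          (s := Finset.Iic q) (p := fun x => x ∈ T)
        rw [h1, h2, Fin.card_Iic] at h3
        exact h3
      -- count of S-complement below M i
      have hcard4 : (S.filter (fun x => x < M i)).card = (i : ℕ) := by
        have himg : S.filter (fun x => x < M i) = (Finset.Iio i).image M := by
          ext s
          simp only [Finset.mem_filter, Finset.mem_image, Finset.mem_Iio, hSdef,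
            Finset.mem_image, Finset.mem_univ, true_and]
          constructor
          · rintro ⟨⟨j, rfl⟩, hlt⟩
            exact ⟨j, hM.lt_iff_lt.mp hlt, rfl⟩
          · rintro ⟨j, hj, rfl⟩
            exact ⟨⟨j, rfl⟩, hM hj⟩
        rw [himg, Finset.card_image_of_injective _ hM.injective, Fin.card_Iio]
      have hcard5 : (S.filter (fun x => x < M i)).card + (Sᶜ.filter (fun x => x < M i)).card
          = (M i : ℕ) := by
        have h1 : (Finset.Iio (M i)).filter (fun x => x ∈ S) = S.filter (fun x => x < M i) := by
          ext x
          simp only [Finset.mem_filter, Finset.mem_Iio]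
          tauto
        have h2 : (Finset.Iio (M i)).filter (fun x => ¬ x ∈ S)
            = Sᶜ.filter (fun x => x < M i) := by
          ext x
          simp only [Finset.mem_filter, Finset.mem_Iio, Finset.mem_compl]
          tauto
        have h3 := Finset.card_filter_add_card_filter_not
          (s := Finset.Iio (M i)) (p := fun x => x ∈ S)
        rw [h1, h2, Fin.card_Iio] at h3
        exact h3
      have hfinal : (k : ℕ) < (Sᶜ.filter (fun x => x < M i)).card := by omega
      have := aux_enum_lt hSc k (M i) hfinal
      rw [hfC q hq]
      exact this
    refine ⟨π, hP, ?_, fun i => hfP i⟩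
    intro p
    constructor
    · intro hp
      by_contra hnex
      have hpT : p ∉ T := fun hmem => hnex ((hmemT p).mp hmem)
      obtain ⟨i, hi1, hi2, hi3⟩ := hlastIdx p hpT
      have hflt := claimC p hpT i hi1 hi2 hi3
      have hlt := hp (P i) hi1
      rw [hπ, hπ, hfP] at hlt
      exact absurd hflt (not_lt.mpr (le_of_lt hlt))
    · rintro ⟨i, rfl⟩
      intro q hq
      rw [hπ, hπ, hfP]
      by_cases hqT : q ∈ T
      · obtain ⟨j, rfl⟩ := (hmemT q).mp hqT
        rw [hfP]
        exact hM (hP.lt_iff_lt.mp hq)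
      · obtain ⟨i', h1, h2, h3⟩ := hlastIdx q hqT
        have h4 := claimC q hqT i' h1 h2 h3
        have h5 : i' < i := hP.lt_iff_lt.mp (h1.trans hq)
        exact h4.trans (hM h5)
end

section
/- The number of valid LRmax specifications for [n], i.e., pairs of sequences (P,M) of equal length r satisfying 1=p_1<...<p_r≤n, 1≤m_1<...<m_r=n, m_i≥p_i, and p_{i+1}≤m_i+1 for all 1≤i≤r-1, equals the Catalan number C_n = (1/(n+1))·binomial(2n,n). -/
/-- A valid LRmax specification for [n] (1-indexed positions and values):
1 = p₁ < ... < p_r ≤ n, 1 ≤ m₁ < ... < m_r = n, pᵢ ≤ mᵢ, and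
p_{i+1} ≤ mᵢ + 1. -/
def ValidSpec (n r : ℕ) (P M : Fin r → ℕ) : Prop :=
  0 < r ∧ StrictMono P ∧ StrictMono M ∧
  (∀ i : Fin r, (i : ℕ) = 0 → P i = 1) ∧
  (∀ i : Fin r, (i : ℕ) = 0 → 1 ≤ M i) ∧
  (∀ i : Fin r, (i : ℕ) = r - 1 → M i = n) ∧
  (∀ i : Fin r, P i ≤ n) ∧
  (∀ i : Fin r, P i ≤ M i) ∧
  ∀ i : Fin r, ∀ h : (i : ℕ) + 1 < r, P ⟨(i : ℕ) + 1, h⟩ ≤ M i + 1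

/-!
Reading off the current left-to-right maximum at each position turns a specification into a
staircase: a monotone map `f` of `{0, …, n - 1}` with `j ≤ f j` (here `f j + 1 = m_i` where `p_i`
is the last position `≤ j + 1`). Conversely the specification is recovered from the corners of the
staircase, the positions where `f` increases and the values there. Staircases satisfy the Catalan
recursion: cutting one of size `n + 1` at its first fixed point `j` leaves two independent
staircases, of sizes `j` and `n - j`.
-/

open Finset

theorem Finset.exists_orderEmbOfFin_eq_of_lt {α : Type*} [LinearOrder α] {s : Finset α} {k : ℕ}
    (h : s.card = k) {i : Fin k} {q : α} (hq : q ∈ s) (hlt : s.orderEmbOfFin h i < q) :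
    ∃ l, i < l ∧ s.orderEmbOfFin h l = q := by
  obtain ⟨l, rfl⟩ : q ∈ Set.range (s.orderEmbOfFin h) := by rwa [range_orderEmbOfFin]
  exact ⟨l, (s.orderEmbOfFin h).lt_iff_lt.mp hlt, rfl⟩

theorem Fin.sigma_prod_eq_of_eq_comp_cast {α β : Type*} {r r' : ℕ} (h : r = r')
    {P : Fin r → α} {M : Fin r → β} {P' : Fin r' → α} {M' : Fin r' → β}
    (hP : ∀ i, P i = P' (Fin.cast h i)) (hM : ∀ i, M i = M' (Fin.cast h i)) :
    (⟨r, P, M⟩ : Σ r, (Fin r → α) × (Fin r → β)) = ⟨r', P', M'⟩ := by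
  subst h
  rw [funext hP, funext hM]
  rfl

def Staircase (n : ℕ) : Type := {f : Fin n → Fin n // Monotone f ∧ ∀ i, i ≤ f i}

instance (n : ℕ) : Fintype (Staircase n) := by unfold Staircase; infer_instance

namespace Staircase

variable {n : ℕ}

/-- Read as a self-map of `ℕ`, extended by the identity, a staircase stays monotone and all index
arithmetic below happens in `ℕ`. -/
def toFun (f : Staircase n) (i : ℕ) : ℕ := if h : i < n then f.1 ⟨i, h⟩ else i

instance : CoeFun (Staircase n) (fun _ => ℕ → ℕ) := ⟨toFun⟩

attribute [coe] toFun

lemma apply_of_lt (f : Staircase n) {i : ℕ} (h : i < n) : f i = f.1 ⟨i, h⟩ := dif_pos h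

lemma apply_of_le (f : Staircase n) {i : ℕ} (h : n ≤ i) : f i = i := dif_neg (by omega)

lemma apply_lt (f : Staircase n) {i : ℕ} (h : i < n) : f i < n := by
  rw [apply_of_lt f h]; exact (f.1 _).is_lt

lemma le_apply (f : Staircase n) (i : ℕ) : i ≤ f i := by
  rcases lt_or_ge i n with h | h
  · rw [apply_of_lt f h]; exact f.2.2 ⟨i, h⟩
  · rw [apply_of_le f h]

lemma monotone (f : Staircase n) : Monotone f := by
  intro a b hab
  rcases lt_or_ge b n with hb | hb
  · rw [apply_of_lt f hb, apply_of_lt f (hab.trans_lt hb)]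
    exact f.2.1 (Fin.mk_le_mk.mpr hab)
  · rw [apply_of_le f hb]
    rcases lt_or_ge a n with ha | ha
    · exact (f.apply_lt ha).le.trans hb
    · rwa [apply_of_le f ha]

lemma ext {f g : Staircase n} (h : ∀ i < n, f i = g i) : f = g := by
  refine Subtype.ext (funext fun i => Fin.ext ?_)
  simpa only [apply_of_lt _ i.is_lt] using h i i.is_lt

def ofFun (F : ℕ → ℕ) (mono : Monotone F) (le : ∀ i < n, i ≤ F i) (lt : ∀ i < n, F i < n) :
    Staircase n :=
  ⟨fun i => ⟨F i, lt i i.is_lt⟩, fun _ _ h => mono h, fun i => le i i.is_lt⟩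

lemma ofFun_apply {F : ℕ → ℕ} {mono le lt} {i : ℕ} (h : i < n) :
    (ofFun F mono le lt : Staircase n) i = F i :=
  apply_of_lt _ h

lemma apply_self_of_succ (f : Staircase (n + 1)) : f n = n :=
  le_antisymm (Nat.le_of_lt_succ (f.apply_lt n.lt_succ_self)) (f.le_apply n)

def firstFix (f : Staircase (n + 1)) : Fin (n + 1) :=
  have h : ∃ i, f i = i := ⟨n, f.apply_self_of_succ⟩
  ⟨Nat.find h, Nat.lt_succ_of_le (Nat.find_min' h f.apply_self_of_succ)⟩

lemma firstFix_eq_iff (f : Staircase (n + 1)) (j : Fin (n + 1)) :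
    f.firstFix = j ↔ f j = j ∧ ∀ i < (j : ℕ), i < f i := by
  rw [Fin.ext_iff, firstFix, Nat.find_eq_iff]
  refine and_congr_right' (forall₂_congr fun i _ => ?_)
  exact ⟨fun h => (f.le_apply i).lt_of_ne' h, fun h => h.ne'⟩

section Split

variable (j : Fin (n + 1))

def lower (f : Staircase (n + 1)) (hf : f.firstFix = j) : Staircase j :=
  have hfix := (f.firstFix_eq_iff j).mp hf
  ofFun (fun i => f i - 1) (fun _ _ h => Nat.sub_le_sub_right (f.monotone h) 1)
    (fun i hi => Nat.le_sub_one_of_lt (hfix.2 i hi))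
    (fun i hi => by
      have := hfix.1 ▸ f.monotone hi.le
      have := hfix.2 i hi
      omega)

def upper (f : Staircase (n + 1)) : Staircase (n - j) :=
  ofFun (fun i => f (j + 1 + i) - (j + 1))
    (fun _ _ h => Nat.sub_le_sub_right (f.monotone (by omega)) _)
    (fun i _ => by have := f.le_apply (j + 1 + i); omega)
    (fun i hi => by have := f.apply_lt (i := j + 1 + i) (by omega); omega)

lemma lower_apply (f : Staircase (n + 1)) (hf : f.firstFix = j) {i : ℕ} (hi : i < j) :
    lower j f hf i = f i - 1 := by
  rw [lower]; exact ofFun_apply hi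

lemma upper_apply (f : Staircase (n + 1)) {i : ℕ} (hi : i < n - j) :
    upper j f i = f (j + 1 + i) - (j + 1) :=
  ofFun_apply hi

def glue (g₁ : Staircase j) (g₂ : Staircase (n - j)) : Staircase (n + 1) :=
  ofFun (fun i => if i < j then g₁ i + 1 else if i = j then j else g₂ (i - (j + 1)) + (j + 1))
    (fun a b hab => by
      have := g₁.monotone hab
      have := g₂.monotone (Nat.sub_le_sub_right hab (j + 1))
      have : a < j → g₁ a < j := g₁.apply_lt
      dsimp only
      split_ifs <;> omega)
    (fun i _ => by
      have := g₁.le_apply i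
      have := g₂.le_apply (i - (j + 1))
      split_ifs <;> omega)
    (fun i hi => by
      have := j.is_lt
      have : i < j → g₁ i < j := g₁.apply_lt
      have : i - (j + 1) < n - j → g₂ (i - (j + 1)) < n - j := g₂.apply_lt
      split_ifs <;> omega)

lemma glue_apply (g₁ : Staircase j) (g₂ : Staircase (n - j)) {i : ℕ} (hi : i < n + 1) :
    glue j g₁ g₂ i =
      if i < j then g₁ i + 1 else if i = j then j else g₂ (i - (j + 1)) + (j + 1) :=
  ofFun_apply hi

lemma firstFix_glue (g₁ : Staircase j) (g₂ : Staircase (n - j)) :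
    (glue j g₁ g₂).firstFix = j := by
  refine (firstFix_eq_iff _ j).mpr ⟨?_, fun i hi => ?_⟩
  · simp [glue_apply j g₁ g₂ j.is_lt]
  · rw [glue_apply j g₁ g₂ (hi.trans j.is_lt), if_pos hi]
    have := g₁.le_apply i
    omega

def splitEquiv :
    {f : Staircase (n + 1) // f.firstFix = j} ≃ Staircase j × Staircase (n - j) where
  toFun f := (lower j f.1 f.2, upper j f.1)
  invFun g := ⟨glue j g.1 g.2, firstFix_glue j g.1 g.2⟩
  left_inv := by
    rintro ⟨f, hf⟩
    obtain ⟨hfix, hlt⟩ := (f.firstFix_eq_iff j).mp hf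
    refine Subtype.ext (ext fun i hi => ?_ : glue j (lower j f hf) (upper j f) = f)
    rw [glue_apply j _ _ hi]
    split_ifs with h₁ h₂
    · rw [lower_apply j f hf h₁]
      have := hlt i h₁
      omega
    · rw [h₂, hfix]
    · rw [upper_apply j f (by omega), Nat.add_sub_cancel' (by omega)]
      have := f.le_apply i
      omega
  right_inv := by
    rintro ⟨g₁, g₂⟩
    refine Prod.ext (ext fun i hi => ?_) (ext fun i hi => ?_)
    · rw [lower_apply j _ _ hi, glue_apply j _ _ (by omega), if_pos hi, Nat.add_sub_cancel]
    · rw [upper_apply j _ hi, glue_apply j _ _ (by omega), if_neg (by omega), if_neg (by omega),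
        Nat.add_sub_cancel_left, Nat.add_sub_cancel]

end Split

theorem card_eq_catalan (n : ℕ) : Fintype.card (Staircase n) = catalan n := by
  induction n using Nat.strong_induction_on with
  | _ n ih =>
    cases n with
    | zero =>
      rw [catalan_zero, Fintype.card_eq_one_iff]
      exact ⟨ofFun id monotone_id (by simp) (by simp),
        fun f => ext fun i hi => absurd hi i.not_lt_zero⟩
    | succ n =>
      classical
      rw [catalan_succ, ← Fintype.card_congr (Equiv.sigmaFiberEquiv firstFix), Fintype.card_sigma]
      refine Finset.sum_congr rfl fun j _ => ?_
      rw [Fintype.card_congr (splitEquiv j), Fintype.card_prod, ih j (by omega),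
        ih (n - j) (by omega)]

variable (f : Staircase n)

-- `q ∈ f.jumps` exactly when `q + 1` is one of the positions `p_i` of the specification.
def jumps : Finset ℕ := (range n).filter fun q => q = 0 ∨ f (q - 1) < f q

lemma mem_jumps {q : ℕ} : q ∈ f.jumps ↔ q < n ∧ (q = 0 ∨ f (q - 1) < f q) := by
  rw [jumps, mem_filter, mem_range]

lemma zero_mem_jumps (hn : 0 < n) : 0 ∈ f.jumps := f.mem_jumps.mpr ⟨hn, .inl rfl⟩

lemma apply_lt_apply_of_mem_jumps {p q : ℕ} (hq : q ∈ f.jumps) (hpq : p < q) : f p < f q := by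
  have := f.monotone (Nat.le_sub_one_of_lt hpq)
  have := (f.mem_jumps.mp hq).2
  omega

lemma apply_eq_of_forall_notMem_jumps {p j : ℕ} (hpj : p ≤ j) (hj : j < n)
    (h : ∀ q, p < q → q ≤ j → q ∉ f.jumps) : f p = f j := by
  induction j, hpj using Nat.le_induction with
  | base => rfl
  | succ j hpj ih =>
    have hjump := h (j + 1) (by omega) le_rfl
    rw [mem_jumps, not_and, not_or, add_tsub_cancel_right] at hjump
    have := f.monotone (Nat.le_add_right j 1)
    have := (hjump hj).2
    rw [ih (by omega) fun q hpq hqj => h q hpq (by omega)]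
    omega

noncomputable def jump : Fin f.jumps.card ↪o ℕ := f.jumps.orderEmbOfFin rfl

lemma jump_mem (i : Fin f.jumps.card) : f.jump i ∈ f.jumps := orderEmbOfFin_mem _ _ _

lemma jump_lt (i : Fin f.jumps.card) : f.jump i < n := (f.mem_jumps.mp (f.jump_mem i)).1

lemma apply_jump_eq {i : Fin f.jumps.card} {j : ℕ} (hij : f.jump i ≤ j) (hj : j < n)
    (hnext : ∀ l, i < l → j < f.jump l) : f (f.jump i) = f j :=
  f.apply_eq_of_forall_notMem_jumps hij hj fun q hiq hqj hq => by
    obtain ⟨l, hil, rfl⟩ := exists_orderEmbOfFin_eq_of_lt rfl hq hiq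
    exact (hnext l hil).not_ge hqj

lemma jump_zero (hn : 0 < n) (hr : 0 < f.jumps.card) : f.jump ⟨0, hr⟩ = 0 := by
  have := min'_le _ _ (f.zero_mem_jumps hn)
  rwa [← orderEmbOfFin_zero rfl hr, Nat.le_zero] at this

lemma apply_jump_last {i : Fin f.jumps.card} (hi : (i : ℕ) = f.jumps.card - 1) :
    f (f.jump i) = n - 1 := by
  have hlast : f (f.jump i) = f (n - 1) :=
    f.apply_jump_eq (Nat.le_sub_one_of_lt (f.jump_lt i)) (by have := f.jump_lt i; omega)
      fun l hl => absurd l.is_lt (by omega)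
  have := f.le_apply (n - 1)
  have := f.apply_lt (i := n - 1) (by have := f.jump_lt i; omega)
  omega

lemma jump_succ_le (i : Fin f.jumps.card) (hi : (i : ℕ) + 1 < f.jumps.card) :
    f.jump ⟨i + 1, hi⟩ ≤ f (f.jump i) + 1 := by
  set i' : Fin f.jumps.card := ⟨i + 1, hi⟩
  have hij := f.jump.strictMono (Fin.lt_def.mpr (Nat.lt_succ_self _) : i < i')
  have hconst : f (f.jump i) = f (f.jump i' - 1) :=
    f.apply_jump_eq (by omega) (by have := f.jump_lt i'; omega) fun l hl => by
      have := f.jump.monotone (Fin.le_def.mpr hl : i' ≤ l)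
      omega
  have := f.le_apply (f.jump i' - 1)
  omega

noncomputable def toSpec : Σ r, (Fin r → ℕ) × (Fin r → ℕ) :=
  ⟨f.jumps.card, fun i => f.jump i + 1, fun i => f (f.jump i) + 1⟩

theorem validSpec_toSpec (hn : 0 < n) :
    ValidSpec n f.toSpec.1 f.toSpec.2.1 f.toSpec.2.2 := by
  have hr : 0 < f.jumps.card := card_pos.mpr ⟨0, f.zero_mem_jumps hn⟩
  refine ⟨hr, fun a b hab => Nat.add_lt_add_right (f.jump.strictMono hab) 1,
    fun a b hab => Nat.add_lt_add_right
      (f.apply_lt_apply_of_mem_jumps (f.jump_mem b) (f.jump.strictMono hab)) 1,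
    fun i hi => ?_, fun i _ => Nat.le_add_left _ _, fun i hi => ?_, fun i => f.jump_lt i,
    fun i => Nat.add_le_add_right (f.le_apply _) 1,
    fun i hi => Nat.add_le_add_right (f.jump_succ_le i hi) 1⟩
  · obtain rfl : i = ⟨0, hr⟩ := Fin.ext hi
    exact congrArg (· + 1) (f.jump_zero hn hr)
  · have := f.jump_lt i
    show f (f.jump i) + 1 = n
    rw [f.apply_jump_last hi]
    omega

end Staircase

namespace ValidSpec

variable {n r : ℕ} {P M : Fin r → ℕ}

lemma pos (hv : ValidSpec n r P M) : 0 < r := hv.1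

lemma strictMono_P (hv : ValidSpec n r P M) : StrictMono P := hv.2.1

lemma strictMono_M (hv : ValidSpec n r P M) : StrictMono M := hv.2.2.1

lemma P_zero (hv : ValidSpec n r P M) : P ⟨0, hv.pos⟩ = 1 := hv.2.2.2.1 _ rfl

lemma M_last (hv : ValidSpec n r P M) : M ⟨r - 1, Nat.sub_one_lt_of_lt hv.pos⟩ = n :=
  hv.2.2.2.2.2.1 _ rfl

lemma P_le_M (hv : ValidSpec n r P M) (i : Fin r) : P i ≤ M i := hv.2.2.2.2.2.2.2.1 i

lemma P_succ_le (hv : ValidSpec n r P M) (i : Fin r) (h : (i : ℕ) + 1 < r) :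
    P ⟨i + 1, h⟩ ≤ M i + 1 :=
  hv.2.2.2.2.2.2.2.2 i h

lemma one_le_P (hv : ValidSpec n r P M) (i : Fin r) : 1 ≤ P i :=
  hv.P_zero ▸ hv.strictMono_P.monotone (Fin.mk_le_of_le_val (Nat.zero_le _))

lemma one_le_M (hv : ValidSpec n r P M) (i : Fin r) : 1 ≤ M i :=
  (hv.one_le_P i).trans (hv.P_le_M i)

lemma M_le (hv : ValidSpec n r P M) (i : Fin r) : M i ≤ n :=
  hv.M_last ▸ hv.strictMono_M.monotone (Fin.le_def.mpr (Nat.le_sub_one_of_lt i.is_lt))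

lemma strictMono_P_sub_one (hv : ValidSpec n r P M) : StrictMono fun i => P i - 1 :=
  fun _ _ h => Nat.sub_lt_sub_right (hv.one_le_P _) (hv.strictMono_P h)

lemma filter_P_le_nonempty (hv : ValidSpec n r P M) (j : ℕ) :
    (univ.filter fun i => P i ≤ j + 1).Nonempty :=
  ⟨⟨0, hv.pos⟩, by simp [hv.P_zero]⟩

def lastIdx (hv : ValidSpec n r P M) (j : ℕ) : Fin r :=
  (univ.filter fun i => P i ≤ j + 1).max' (hv.filter_P_le_nonempty j)

lemma P_lastIdx_le (hv : ValidSpec n r P M) (j : ℕ) : P (hv.lastIdx j) ≤ j + 1 :=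
  (mem_filter.mp (max'_mem _ (hv.filter_P_le_nonempty j))).2

lemma le_lastIdx (hv : ValidSpec n r P M) {i : Fin r} {j : ℕ} (h : P i ≤ j + 1) :
    i ≤ hv.lastIdx j :=
  le_max' _ _ (mem_filter.mpr ⟨mem_univ i, h⟩)

lemma lastIdx_mono (hv : ValidSpec n r P M) : Monotone hv.lastIdx :=
  fun a b h => hv.le_lastIdx ((hv.P_lastIdx_le a).trans (by omega))

lemma lastIdx_P_sub_one (hv : ValidSpec n r P M) (i : Fin r) : hv.lastIdx (P i - 1) = i := by
  refine le_antisymm (not_lt.mp fun h => ?_) (hv.le_lastIdx (by omega))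
  have := hv.strictMono_P h
  have := hv.P_lastIdx_le (P i - 1)
  have := hv.one_le_P i
  omega

lemma lt_M_lastIdx (hv : ValidSpec n r P M) {j : ℕ} (hj : j < n) : j < M (hv.lastIdx j) := by
  by_cases h : (hv.lastIdx j : ℕ) + 1 < r
  · have := hv.P_succ_le _ h
    have : ¬ P ⟨_, h⟩ ≤ j + 1 := fun h' =>
      (hv.le_lastIdx h').not_gt (Fin.lt_def.mpr (Nat.lt_succ_self _))
    omega
  · rwa [show hv.lastIdx j = ⟨r - 1, Nat.sub_one_lt_of_lt hv.pos⟩ from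
      Fin.ext (show (hv.lastIdx j : ℕ) = r - 1 by omega),
      hv.M_last]

def toStaircase (hv : ValidSpec n r P M) : Staircase n :=
  .ofFun (fun j => M (hv.lastIdx j) - 1)
    (fun _ _ h => Nat.sub_le_sub_right (hv.strictMono_M.monotone (hv.lastIdx_mono h)) 1)
    (fun _ hj => Nat.le_sub_one_of_lt (hv.lt_M_lastIdx hj))
    (fun j _ => by have := hv.M_le (hv.lastIdx j); have := hv.one_le_M (hv.lastIdx j); omega)

lemma toStaircase_apply (hv : ValidSpec n r P M) {j : ℕ} (hj : j < n) :
    hv.toStaircase j = M (hv.lastIdx j) - 1 :=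
  Staircase.ofFun_apply hj

lemma mem_jumps_toStaircase (hv : ValidSpec n r P M) {q : ℕ} :
    q ∈ hv.toStaircase.jumps ↔ ∃ i, P i = q + 1 := by
  rw [Staircase.mem_jumps]
  constructor
  · rintro ⟨hq, rfl | hlt⟩
    · exact ⟨_, hv.P_zero⟩
    · rw [hv.toStaircase_apply (by omega), hv.toStaircase_apply hq] at hlt
      have hidx : hv.lastIdx (q - 1) < hv.lastIdx q :=
        hv.strictMono_M.lt_iff_lt.mp (by omega)
      refine ⟨hv.lastIdx q, le_antisymm (hv.P_lastIdx_le q) (not_lt.mp fun h => ?_)⟩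
      exact (hv.le_lastIdx (j := q - 1) (by omega)).not_gt hidx
  · rintro ⟨i, hi⟩
    have hqn : q < n := by have := hv.P_le_M i; have := hv.M_le i; omega
    refine ⟨hqn, or_iff_not_imp_left.mpr fun hq => ?_⟩
    have hlt : hv.lastIdx (q - 1) < hv.lastIdx q :=
      (hv.strictMono_P.lt_iff_lt.mp
        (by have := hv.P_lastIdx_le (q - 1); omega)).trans_le (hv.le_lastIdx hi.le)
    have := hv.strictMono_M hlt
    have := hv.one_le_M (hv.lastIdx (q - 1))
    rw [hv.toStaircase_apply (by omega), hv.toStaircase_apply (by omega)]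
    omega

lemma jumps_toStaircase (hv : ValidSpec n r P M) :
    hv.toStaircase.jumps = univ.image fun i => P i - 1 := by
  ext q
  simp only [hv.mem_jumps_toStaircase, mem_image, mem_univ, true_and]
  exact exists_congr fun i => by have := hv.one_le_P i; omega

lemma card_jumps_toStaircase (hv : ValidSpec n r P M) : hv.toStaircase.jumps.card = r := by
  rw [jumps_toStaircase, card_image_of_injective _ hv.strictMono_P_sub_one.injective, card_univ,
    Fintype.card_fin]

lemma jump_toStaircase (hv : ValidSpec n r P M) (i : Fin hv.toStaircase.jumps.card) :
    hv.toStaircase.jump i = P (Fin.cast hv.card_jumps_toStaircase i) - 1 := by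
  refine (congrFun (orderEmbOfFin_unique rfl
    (f := fun i => P (Fin.cast hv.card_jumps_toStaircase i) - 1) (fun i => ?_) fun a b h => ?_)
    i).symm
  · exact hv.mem_jumps_toStaircase.mpr ⟨_, (Nat.sub_add_cancel (hv.one_le_P _)).symm⟩
  · exact hv.strictMono_P_sub_one h

lemma toSpec_toStaircase (hv : ValidSpec n r P M) : hv.toStaircase.toSpec = ⟨r, P, M⟩ := by
  refine Fin.sigma_prod_eq_of_eq_comp_cast hv.card_jumps_toStaircase (fun i => ?_) fun i => ?_
  · rw [jump_toStaircase]
    have := hv.one_le_P (Fin.cast hv.card_jumps_toStaircase i)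
    omega
  · rw [hv.toStaircase_apply (Staircase.jump_lt _ i), jump_toStaircase, lastIdx_P_sub_one]
    have := hv.one_le_M (Fin.cast hv.card_jumps_toStaircase i)
    omega

end ValidSpec

theorem Staircase.toStaircase_validSpec_toSpec {n : ℕ} (hn : 0 < n) (f : Staircase n) :
    (f.validSpec_toSpec hn).toStaircase = f := by
  refine ext fun j hj => ?_
  set hv := f.validSpec_toSpec hn
  rw [hv.toStaircase_apply hj]
  change f (f.jump (hv.lastIdx j)) + 1 - 1 = f j
  rw [Nat.add_sub_cancel]
  refine f.apply_jump_eq (Nat.le_of_succ_le_succ (hv.P_lastIdx_le j)) hj fun l hl => ?_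
  by_contra! h
  exact (hv.le_lastIdx (show f.jump l + 1 ≤ j + 1 by omega)).not_gt hl

noncomputable def validSpecEquivStaircase {n : ℕ} (hn : 0 < n) :
    {s : Σ r : ℕ, (Fin r → ℕ) × (Fin r → ℕ) // ValidSpec n s.1 s.2.1 s.2.2} ≃
      Staircase n where
  toFun s := s.2.toStaircase
  invFun f := ⟨f.toSpec, f.validSpec_toSpec hn⟩
  left_inv := by
    rintro ⟨⟨r, P, M⟩, hv⟩
    exact Subtype.ext hv.toSpec_toStaircase
  right_inv f := f.toStaircase_validSpec_toSpec hn

theorem stmt2 (n : ℕ) (hn : 0 < n) :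
    Nat.card {s : Σ r : ℕ, (Fin r → ℕ) × (Fin r → ℕ) //
        ValidSpec n s.1 s.2.1 s.2.2} =
      Nat.choose (2 * n) n / (n + 1) := by
  rw [Nat.card_congr (validSpecEquivStaircase hn), Nat.card_eq_fintype_card,
    Staircase.card_eq_catalan, catalan_eq_centralBinom_div, Nat.centralBinom_eq_two_mul_choose]
end

section
/- A permutation of [n] avoids the pattern 3-2-1 if and only if it equals the minimal permutation for its LRmax specification, i.e., the non-LRmax positions are filled, reading left to right, with the smallest elements of [n] not yet used. -/
def Avoids321 {n : ℕ} (π : Equiv.Perm (Fin n)) : Prop :=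
  ¬ ∃ i j k : Fin n, i < j ∧ j < k ∧ π k < π j ∧ π j < π i

theorem stmt3 (n : ℕ) (π : Equiv.Perm (Fin n)) :
    Avoids321 π ↔
      ∀ p : Fin n, ¬ IsLRmax π p →
        ∀ v : Fin n, (∀ q, q < p → π q ≠ v) → π p ≤ v := by
  constructor
  · intro hav p hp v hv
    by_contra hlt
    push_neg at hlt
    -- hlt : v < π p
    rw [IsLRmax] at hp
    push_neg at hp
    obtain ⟨q, hq, hqge⟩ := hp
    -- π q ≥ π p, and π q ≠ π p since q ≠ p
    have hne : π q ≠ π p := fun h => absurd (π.injective h) (ne_of_lt hq)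
    have hgt : π p < π q := lt_of_le_of_ne hqge (Ne.symm hne)
    -- v = π r for some r
    obtain ⟨r, hr⟩ := π.surjective v
    have hrp : p < r := by
      rcases lt_trichotomy r p with h | h | h
      · exact absurd hr (hv r h)
      · exact absurd (h ▸ hr : π p = v) (ne_of_gt hlt)
      · exact h
    exact hav ⟨q, p, r, hq, hrp, hr ▸ hlt, hgt⟩
  · rintro h ⟨i, j, k, hij, hjk, hkj, hji⟩
    have hnl : ¬ IsLRmax π j := fun hl => absurd (hl i hij) (not_lt.mpr (le_of_lt hji))
    have hv : ∀ q, q < j → π q ≠ π k := fun q hq he =>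
      absurd (π.injective he) (ne_of_lt (hq.trans hjk))
    exact absurd (h j hnl (π k) hv) (not_le.mpr hkj)
end

section
/- A permutation of [n] avoids the pattern 3-1-2 if and only if it equals the maximal permutation for its LRmax specification, i.e., the non-LRmax positions are filled, reading left to right, with the largest unused element of [n] that does not create a new left-to-right maximum. -/
def Avoids312 {n : ℕ} (π : Equiv.Perm (Fin n)) : Prop :=
  ¬ ∃ i j k : Fin n, i < j ∧ j < k ∧ π j < π k ∧ π k < π i

theorem stmt4 (n : ℕ) (π : Equiv.Perm (Fin n)) :
    Avoids312 π ↔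
      ∀ p : Fin n, ¬ IsLRmax π p →
        ∀ v : Fin n, (∀ q, q < p → π q ≠ v) → (∃ q, q < p ∧ v < π q) →
          v ≤ π p := by
  constructor
  · intro h p _ v hne hex
    by_contra hlt
    push_neg at hlt
    set k := π.symm v with hk
    have hπk : π k = v := π.apply_symm_apply v
    have hkp : p < k := by
      rcases lt_trichotomy k p with h1 | h1 | h1
      · exact absurd hπk (hne k h1)
      · exact absurd (h1 ▸ hπk) (ne_of_lt hlt)
      · exact h1
    obtain ⟨q, hq, hvq⟩ := hex
    exact h ⟨q, p, k, hq, hkp, hπk ▸ hlt, hπk ▸ hvq⟩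
  · intro h ⟨i, j, k, hij, hjk, h1, h2⟩
    have hnl : ¬ IsLRmax π j := fun hl => absurd (hl i hij) (by
      exact not_lt.2 (le_of_lt (h1.trans h2)))
    have := h j hnl (π k)
      (fun q hq hne => absurd (π.injective hne) (ne_of_lt (hq.trans hjk)))
      ⟨i, hij, h2⟩
    exact absurd this (not_le.2 h1)
end

section
/- There is a bijection, preserving the LRmax specification, between permutations of [n] avoiding 3-2-1 and permutations of [n] avoiding 3-1-2; in particular the number of 3-2-1-avoiding permutations of [n] equals the number of 3-1-2-avoiding permutations of [n]. -/
/-- σ and τ have the same LRmax specification: same positions of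
left-to-right maxima and the same values there. -/
def SameLRmaxSpec {n : ℕ} (σ τ : Equiv.Perm (Fin n)) : Prop :=
  (∀ p, IsLRmax σ p ↔ IsLRmax τ p) ∧ ∀ p, IsLRmax σ p → σ p = τ p

/-!
Swapping two entries that are both smaller than some earlier entry changes no left-to-right
maximum, so the lexicographically least permutation with a given LRmax specification avoids
3-2-1 and the greatest one avoids 3-1-2. Conversely, if `σ < τ` lexicographically and both
have the same specification, then at the first position `p` where they differ `τ p` is not a
left-to-right maximum; the later occurrence of the value `σ p` in `τ` completes a 3-2-1 in `τ`,
and the later occurrence of `τ p` in `σ` completes a 3-1-2 in `σ`. Hence every specification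
class contains exactly one permutation of each kind.
-/

open Equiv

theorem Setoid.bijective_mk_comp_val_of_unique_reps {α : Type*} (r : Setoid α) {p : α → Prop}
    (hex : ∀ a, ∃ x, r a x ∧ p x) (huniq : ∀ x y, r x y → p x → p y → x = y) :
    Function.Bijective fun x : {x // p x} => Quotient.mk r x.1 :=
  ⟨fun x y hxy => Subtype.ext (huniq _ _ (Quotient.exact hxy) x.2 y.2), fun c =>
    Quotient.inductionOn c fun a =>
      let ⟨x, hax, hx⟩ := hex a
      ⟨⟨x, hx⟩, Quotient.sound (r.symm hax)⟩⟩

theorem Setoid.exists_equiv_of_unique_reps {α : Type*} (r : Setoid α) {p q : α → Prop}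
    (hp : ∀ a, ∃ x, r a x ∧ p x) (hp' : ∀ x y, r x y → p x → p y → x = y)
    (hq : ∀ a, ∃ x, r a x ∧ q x) (hq' : ∀ x y, r x y → q x → q y → x = y) :
    ∃ f : {x // p x} ≃ {x // q x}, ∀ x : {x // p x}, r x.1 (f x).1 := by
  let eP := Equiv.ofBijective _ (r.bijective_mk_comp_val_of_unique_reps hp hp')
  let eQ := Equiv.ofBijective _ (r.bijective_mk_comp_val_of_unique_reps hq hq')
  exact ⟨eP.trans eQ.symm, fun x => Quotient.exact (eQ.apply_symm_apply (eP x)).symm⟩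

theorem Pi.toLex_lt_toLex_iff {ι : Type*} {β : ι → Type*} [LT ι] [∀ i, LT (β i)]
    {x y : ∀ i, β i} : toLex x < toLex y ↔ ∃ i, (∀ j < i, x j = y j) ∧ x i < y i :=
  Iff.rfl

variable {n : ℕ} {σ τ π : Perm (Fin n)} {i j k p : Fin n}

theorem SameLRmaxSpec.refl (σ : Perm (Fin n)) : SameLRmaxSpec σ σ :=
  ⟨fun _ => Iff.rfl, fun _ _ => rfl⟩

theorem SameLRmaxSpec.symm (h : SameLRmaxSpec σ τ) : SameLRmaxSpec τ σ :=
  ⟨fun p => (h.1 p).symm, fun p hp => (h.2 p ((h.1 p).2 hp)).symm⟩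

theorem SameLRmaxSpec.trans (h : SameLRmaxSpec σ τ) (h' : SameLRmaxSpec τ π) :
    SameLRmaxSpec σ π :=
  ⟨fun p => (h.1 p).trans (h'.1 p), fun p hp => (h.2 p hp).trans (h'.2 p ((h.1 p).1 hp))⟩

def lrmaxSetoid (n : ℕ) : Setoid (Perm (Fin n)) where
  r := SameLRmaxSpec
  iseqv := ⟨SameLRmaxSpec.refl, SameLRmaxSpec.symm, SameLRmaxSpec.trans⟩

theorem not_isLRmax_of_lt (hqp : i < p) (h : π p < π i) : ¬IsLRmax π p :=
  fun hp => (hp i hqp).asymm h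

theorem exists_lt_apply_lt_of_not_isLRmax (h : ¬IsLRmax π p) : ∃ i < p, π p < π i := by
  simp only [IsLRmax, not_forall, not_lt] at h
  obtain ⟨i, hip, hle⟩ := h
  exact ⟨i, hip, hle.lt_of_ne (π.injective.ne hip.ne')⟩

theorem isLRmax_congr_of_eqOn_le (h : ∀ q ≤ p, σ q = τ q) : IsLRmax σ p ↔ IsLRmax τ p := by
  simp only [IsLRmax]
  exact forall₂_congr fun q hq => by rw [h q hq.le, h p le_rfl]

theorem isLRmax_iff_of_apply_lt (hip : i < p) (hij : i ≠ j) (hik : i ≠ k)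
    (hj : π j < π i) (hk : π k < π i) :
    IsLRmax π p ↔ ∀ q < p, q ≠ j → q ≠ k → π q < π p := by
  refine ⟨fun h q hq _ _ => h q hq, fun h q hq => ?_⟩
  have hi := h i hip hij hik
  by_cases hqj : q = j
  · exact hqj ▸ hj.trans hi
  by_cases hqk : q = k
  · exact hqk ▸ hk.trans hi
  exact h q hq hqj hqk

theorem sameLRmaxSpec_mul_swap (σ : Perm (Fin n)) (hij : i < j) (hjk : j < k)
    (hj : σ j < σ i) (hk : σ k < σ i) : SameLRmaxSpec σ (σ * swap j k) := by
  set τ := σ * swap j k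
  have hik : i < k := hij.trans hjk
  have hτ : ∀ q, q ≠ j → q ≠ k → τ q = σ q := fun q hqj hqk => by
    simp [τ, swap_apply_of_ne_of_ne hqj hqk]
  have hτj : τ j = σ k := by simp [τ]
  have hτk : τ k = σ j := by simp [τ]
  have hτi : τ i = σ i := hτ i hij.ne hik.ne
  have hσj : ¬IsLRmax σ j := not_isLRmax_of_lt hij hj
  have hσk : ¬IsLRmax σ k := not_isLRmax_of_lt hik hk
  refine ⟨fun p => ?_, fun p hp => (hτ p (by rintro rfl; exact hσj hp)
    (by rintro rfl; exact hσk hp)).symm⟩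
  by_cases hpj : p = j
  · subst hpj
    exact iff_of_false hσj (not_isLRmax_of_lt hij (by rwa [hτj, hτi]))
  by_cases hpk : p = k
  · subst hpk
    exact iff_of_false hσk (not_isLRmax_of_lt hik (by rwa [hτk, hτi]))
  rcases lt_or_gt_of_ne hpj with hpj' | hjp
  · exact isLRmax_congr_of_eqOn_le fun q hq =>
      (hτ q (hq.trans_lt hpj').ne (hq.trans_lt (hpj'.trans hjk)).ne).symm
  · have hip := hij.trans hjp
    rw [isLRmax_iff_of_apply_lt hip hij.ne hik.ne hj hk,
      isLRmax_iff_of_apply_lt hip hij.ne hik.ne (by rwa [hτj, hτi]) (by rwa [hτk, hτi])]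
    exact forall₂_congr fun q _ => imp_congr_right fun hqj => imp_congr_right fun hqk => by
      rw [hτ q hqj hqk, hτ p hpj hpk]

theorem toLex_mul_swap_lt (hjk : j < k) (h : σ k < σ j) : toLex ⇑(σ * swap j k) < toLex ⇑σ :=
  Pi.toLex_lt_toLex_iff.2
    ⟨j, fun q hq => by simp [swap_apply_of_ne_of_ne hq.ne (hq.trans hjk).ne], by simpa using h⟩

theorem avoids321_of_forall_toLex_le (h : ∀ τ, SameLRmaxSpec σ τ → toLex ⇑σ ≤ toLex ⇑τ) :
    Avoids321 σ := by
  rintro ⟨i, j, k, hij, hjk, hkj, hji⟩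
  exact (h _ (sameLRmaxSpec_mul_swap σ hij hjk hji (hkj.trans hji))).not_gt
    (toLex_mul_swap_lt hjk hkj)

theorem avoids312_of_forall_le_toLex (h : ∀ τ, SameLRmaxSpec σ τ → toLex ⇑τ ≤ toLex ⇑σ) :
    Avoids312 σ := by
  rintro ⟨i, j, k, hij, hjk, hjk', hki⟩
  have hlt := toLex_mul_swap_lt (σ := σ * swap j k) hjk (by simpa using hjk')
  rw [mul_assoc, swap_mul_self, mul_one] at hlt
  exact (h _ (sameLRmaxSpec_mul_swap σ hij hjk (hjk'.trans hki) hki)).not_gt hlt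

theorem exists_sameLRmaxSpec_avoids321 (π : Perm (Fin n)) :
    ∃ σ, SameLRmaxSpec π σ ∧ Avoids321 σ := by
  obtain ⟨σ, hσ, hmin⟩ := Set.exists_min_image {τ | SameLRmaxSpec π τ} (toLex ⇑·)
    (Set.toFinite _) ⟨π, .refl π⟩
  exact ⟨σ, hσ, avoids321_of_forall_toLex_le fun τ hτ => hmin τ (hσ.trans hτ)⟩

theorem exists_sameLRmaxSpec_avoids312 (π : Perm (Fin n)) :
    ∃ σ, SameLRmaxSpec π σ ∧ Avoids312 σ := by
  obtain ⟨σ, hσ, hmax⟩ := Set.exists_max_image {τ | SameLRmaxSpec π τ} (toLex ⇑·)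
    (Set.toFinite _) ⟨π, .refl π⟩
  exact ⟨σ, hσ, avoids312_of_forall_le_toLex fun τ hτ => hmax τ (hσ.trans hτ)⟩

theorem SameLRmaxSpec.exists_lt_apply_lt_of_ne (h : SameLRmaxSpec σ τ) (hp : σ p ≠ τ p) :
    ∃ i < p, τ p < τ i :=
  exists_lt_apply_lt_of_not_isLRmax fun hτ => hp (h.2 p ((h.1 p).2 hτ))

theorem lt_symm_apply_of_eqOn_lt (h : ∀ q < p, σ q = τ q) (hp : σ p ≠ τ p) :
    p < σ.symm (τ p) := by
  by_contra! hle
  rcases hle.lt_or_eq with hlt | heq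
  · exact hlt.ne (τ.injective (by simpa using (h _ hlt).symm))
  · exact hp (σ.symm_apply_eq.1 heq).symm

theorem not_avoids321_of_toLex_lt (h : SameLRmaxSpec σ τ) (hlt : toLex ⇑σ < toLex ⇑τ) :
    ¬Avoids321 τ := by
  obtain ⟨p, hagree, hp⟩ := Pi.toLex_lt_toLex_iff.1 hlt
  obtain ⟨i, hip, hi⟩ := h.exists_lt_apply_lt_of_ne hp.ne
  have hpr := lt_symm_apply_of_eqOn_lt (fun q hq => (hagree q hq).symm) hp.ne'
  exact fun hτ => hτ ⟨i, p, _, hip, hpr, by simpa using hp, hi⟩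

theorem not_avoids312_of_toLex_lt (h : SameLRmaxSpec σ τ) (hlt : toLex ⇑σ < toLex ⇑τ) :
    ¬Avoids312 σ := by
  obtain ⟨p, hagree, hp⟩ := Pi.toLex_lt_toLex_iff.1 hlt
  obtain ⟨i, hip, hi⟩ := h.exists_lt_apply_lt_of_ne hp.ne
  have hpq := lt_symm_apply_of_eqOn_lt hagree hp.ne
  exact fun hσ => hσ ⟨i, p, _, hip, hpq, by simpa using hp,
    by rw [apply_symm_apply, hagree i hip]; exact hi⟩

theorem SameLRmaxSpec.eq_of_avoids321 (h : SameLRmaxSpec σ τ) (hσ : Avoids321 σ)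
    (hτ : Avoids321 τ) : σ = τ := by
  by_contra hne
  rcases lt_or_gt_of_ne (toLex.injective.ne (DFunLike.coe_injective.ne hne)) with hlt | hlt
  · exact not_avoids321_of_toLex_lt h hlt hτ
  · exact not_avoids321_of_toLex_lt h.symm hlt hσ

theorem SameLRmaxSpec.eq_of_avoids312 (h : SameLRmaxSpec σ τ) (hσ : Avoids312 σ)
    (hτ : Avoids312 τ) : σ = τ := by
  by_contra hne
  rcases lt_or_gt_of_ne (toLex.injective.ne (DFunLike.coe_injective.ne hne)) with hlt | hlt
  · exact not_avoids312_of_toLex_lt h hlt hσ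
  · exact not_avoids312_of_toLex_lt h.symm hlt hτ

theorem stmt5 (n : ℕ) :
    (∃ f : {π : Equiv.Perm (Fin n) // Avoids321 π} ≃
        {π : Equiv.Perm (Fin n) // Avoids312 π},
      ∀ σ, SameLRmaxSpec σ.1 (f σ).1) ∧
    Nat.card {π : Equiv.Perm (Fin n) // Avoids321 π} =
      Nat.card {π : Equiv.Perm (Fin n) // Avoids312 π} := by
  obtain ⟨f, hf⟩ := (lrmaxSetoid n).exists_equiv_of_unique_reps
    exists_sameLRmaxSpec_avoids321 (fun _ _ h => h.eq_of_avoids321)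
    exists_sameLRmaxSpec_avoids312 (fun _ _ h => h.eq_of_avoids312)
  exact ⟨⟨f, hf⟩, Nat.card_congr f⟩
end

section
/- For any two permutations σ, τ of [n] with the same LRmax specification, if σ avoids 3-2-1 and τ avoids 3-2-1, then σ = τ (uniqueness of the 3-2-1-avoiding permutation with a given LRmax specification). -/
lemma key_lemma {n : ℕ} (π : Equiv.Perm (Fin n)) (hπ : Avoids321 π) (p : Fin n)
    (hp : ¬ IsLRmax π p) (q : Fin n) (hpq : p ≤ q) : π p ≤ π q := by
  rcases eq_or_lt_of_le hpq with rfl | hlt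
  · exact le_refl _
  simp only [IsLRmax, not_forall] at hp
  obtain ⟨r, hr, hr2⟩ := hp
  by_contra hle
  push_neg at hle
  have hne : π p ≠ π r := fun hh => (ne_of_lt hr) (π.injective hh.symm)
  exact hπ ⟨r, p, q, hr, hlt, hle, lt_of_le_of_ne (not_lt.mp hr2) hne⟩

theorem stmt6 (n : ℕ) (σ τ : Equiv.Perm (Fin n))
    (h : SameLRmaxSpec σ τ) (hσ : Avoids321 σ) (hτ : Avoids321 τ) :
    σ = τ := by
  have main : ∀ m : ℕ, ∀ p : Fin n, p.val = m → σ p = τ p := by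
    intro m
    induction m using Nat.strong_induction_on with
    | _ m ih =>
      intro p hp
      by_cases hL : IsLRmax σ p
      · exact h.2 p hL
      · have hLτ : ¬ IsLRmax τ p := fun hh => hL ((h.1 p).mpr hh)
        have ihp : ∀ r : Fin n, r < p → σ r = τ r := by
          intro r hr
          exact ih r.val (by omega) r rfl
        have h1 : σ p ≤ τ p := by
          have hsq : σ (σ.symm (τ p)) = τ p := σ.apply_symm_apply _
          have hpq : p ≤ σ.symm (τ p) := by
            by_contra hc
            push_neg at hc
            have h3 : τ (σ.symm (τ p)) = τ p := by rw [← ihp _ hc, hsq]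
            have := τ.injective h3
            omega
          calc σ p ≤ σ (σ.symm (τ p)) := key_lemma σ hσ p hL _ hpq
            _ = τ p := hsq
        have h2 : τ p ≤ σ p := by
          have hsq : τ (τ.symm (σ p)) = σ p := τ.apply_symm_apply _
          have hpq : p ≤ τ.symm (σ p) := by
            by_contra hc
            push_neg at hc
            have h3 : σ (τ.symm (σ p)) = σ p := by rw [ihp _ hc, hsq]
            have := σ.injective h3
            omega
          calc τ p ≤ τ (τ.symm (σ p)) := key_lemma τ hτ p hLτ _ hpq
            _ = σ p := hsq
        exact le_antisymm h1 h2
  exact Equiv.ext (fun p => main p.val p rfl)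
end

section
/- For any two permutations σ, τ of [n] with the same LRmax specification, if σ avoids 3-1-2 and τ avoids 3-1-2, then σ = τ (uniqueness of the 3-1-2-avoiding permutation with a given LRmax specification). -/
theorem stmt7 (n : ℕ) (σ τ : Equiv.Perm (Fin n))
    (h : SameLRmaxSpec σ τ) (hσ : Avoids312 σ) (hτ : Avoids312 τ) :
    σ = τ := by
  have key : ∀ p : Fin n, σ p = τ p := by
    have H : ∀ m : ℕ, ∀ p : Fin n, p.val < m → σ p = τ p := by
      intro m
      induction m with
      | zero => exact fun p hp => absurd hp (Nat.not_lt_zero _)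
      | succ m IHm =>
      intro p hp
      have IH : ∀ q : Fin n, q < p → σ q = τ q := fun q hq =>
        IHm q (lt_of_lt_of_le hq (Nat.lt_succ_iff.mp hp))
      by_cases hm : IsLRmax σ p
      · exact h.2 p hm
      · have hm' : ¬ IsLRmax τ p := fun ht => hm ((h.1 p).mpr ht)
        unfold IsLRmax at hm hm'
        push_neg at hm hm'
        obtain ⟨a, hap, ha⟩ := hm
        obtain ⟨b, hbp, hb⟩ := hm'
        have hσa : σ p < σ a :=
          lt_of_le_of_ne ha fun e => absurd (σ.injective e.symm) (ne_of_lt hap)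
        have hτb : τ p < τ b :=
          lt_of_le_of_ne hb fun e => absurd (τ.injective e.symm) (ne_of_lt hbp)
        rcases lt_trichotomy (σ p) (τ p) with hlt | heq | hgt
        · -- find k with σ k = τ p, k > p
          set k := σ.symm (τ p) with hk
          have hσk : σ k = τ p := σ.apply_symm_apply _
          have hkp : p < k := by
            rcases lt_trichotomy k p with h1 | h1 | h1
            · have : τ k = τ p := (IH k h1).symm.trans hσk
              exact absurd (τ.injective this) (ne_of_lt h1)
            · exact absurd (h1 ▸ hσk) (ne_of_lt hlt)
            · exact h1
          have hσb : σ b = τ b := IH b hbp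
          exact absurd ⟨b, p, k, hbp, hkp, by rw [hσk]; exact hlt, by rw [hσk, hσb]; exact hτb⟩ hσ
        · exact heq
        · set k := τ.symm (σ p) with hk
          have hτk : τ k = σ p := τ.apply_symm_apply _
          have hkp : p < k := by
            rcases lt_trichotomy k p with h1 | h1 | h1
            · have : σ k = σ p := (IH k h1).trans hτk
              exact absurd (σ.injective this) (ne_of_lt h1)
            · exfalso; apply ne_of_gt hgt; rw [← hτk, h1]
            · exact h1
          have hτa : σ a = τ a := IH a hap
          exact absurd ⟨a, p, k, hap, hkp, by rw [hτk]; exact hgt, by rw [hτk, ← hτa]; exact hσa⟩ hτ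
    exact fun p => H (p.val + 1) p (Nat.lt_succ_self _)
  exact Equiv.ext key
end

section
/- Write a permutation π of [n] as m_1 L_1 m_2 L_2 ... m_r L_r where m_1,...,m_r are the left-to-right maxima and L_i the (possibly empty) blocks between them. Then π is 3-5̲-2-4-1-satisfying if and only if (i) each block L_i (as a sequence, under order-isomorphic reduction) is 3-5̲-2-4-1-satisfying, and (ii) the permutation obtained from π by sorting the entries within each block L_i into increasing order avoids the pattern 3-2-1. -/
/-- π contains 3-2-4-1 only as part of 3-5-2-4-1. -/
def Satisfies35241 {n : ℕ} (π : Equiv.Perm (Fin n)) : Prop :=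
  ∀ i j k l : Fin n, i < j → j < k → k < l →
    π l < π j → π j < π i → π i < π k →
    ∃ m : Fin n, i < m ∧ m < j ∧ π k < π m

/-- p and q are non-LRmax positions lying in the same block between
consecutive left-to-right maxima: no LRmax position in [min p q, max p q]. -/
def SameBlock {n : ℕ} (π : Equiv.Perm (Fin n)) (p q : Fin n) : Prop :=
  ∀ t : Fin n, min p q ≤ t → t ≤ max p q → ¬ IsLRmax π t

/-- σ is obtained from π by sorting the entries within each block
(between consecutive left-to-right maxima) into increasing order. -/
def SortsBlocksInc {n : ℕ} (π σ : Equiv.Perm (Fin n)) : Prop :=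
  ∃ b : Equiv.Perm (Fin n),
    (∀ p, σ p = π (b p)) ∧
    (∀ p, b p = p ∨ SameBlock π p (b p)) ∧
    (∀ p q, p < q → SameBlock π p q → σ p < σ q)

/-!
Cut the one-line notation of `π` into its factors `m₁, L₁, m₂, L₂, …`. Sorting the blocks keeps
every entry inside its factor, so the block-sorted permutation contains `3-2-1` exactly when `π`
has a `3-2-1` whose entries lie in three different factors. Such a split `3-2-1` `a b c` becomes
an unsatisfied `3-2-4-1` once the left-to-right maximum between `b` and `c`, which no earlier
entry exceeds, is inserted as the `4`. Conversely, take an occurrence of `3-2-4-1` that does not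
extend to `3-5-2-4-1` and does not lie in one block: either it contains a split `3-2-1`, or the
left-to-right maximum dominating its first or third entry completes one.
-/

open Finset

section FactorIndex

variable {n : ℕ} {π : Equiv.Perm (Fin n)} {p q : Fin n}

instance (π : Equiv.Perm (Fin n)) : DecidablePred (IsLRmax π) :=
  fun p => inferInstanceAs (Decidable (∀ q, q < p → π q < π p))

def lrmaxCount (π : Equiv.Perm (Fin n)) (p : Fin n) : ℕ := #{t ∈ Iic p | IsLRmax π t}

/-- The index of the factor containing position `p` in `m₁ L₁ m₂ L₂ ⋯`, with `mᵢ ↦ 2i` and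
`Lᵢ ↦ 2i + 1`. -/
def factorIndex (π : Equiv.Perm (Fin n)) (p : Fin n) : ℕ :=
  2 * lrmaxCount π p + if IsLRmax π p then 0 else 1

lemma lrmaxCount_mono : Monotone (lrmaxCount π) := fun _ _ h =>
  card_le_card (filter_subset_filter _ (Iic_subset_Iic.2 h))

lemma lrmaxCount_lt_of_isLRmax (h : p < q) (hq : IsLRmax π q) :
    lrmaxCount π p < lrmaxCount π q := by
  refine card_lt_card ((ssubset_iff_of_subset
    (filter_subset_filter _ (Iic_subset_Iic.2 h.le))).2 ⟨q, ?_, ?_⟩)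
  · simp [hq]
  · simp [h.not_ge]

lemma factorIndex_mono : Monotone (factorIndex π) := by
  intro p q hpq
  obtain rfl | hpq := hpq.eq_or_lt
  · exact le_rfl
  have hcount := lrmaxCount_mono (π := π) hpq.le
  unfold factorIndex
  by_cases hq : IsLRmax π q
  · have := lrmaxCount_lt_of_isLRmax hpq hq
    split_ifs <;> omega
  · split_ifs <;> omega

lemma sameBlock_comm : SameBlock π p q ↔ SameBlock π q p := by
  simp only [SameBlock, min_comm, max_comm]

lemma sameBlock_iff_of_le (h : p ≤ q) :
    SameBlock π p q ↔ ∀ t, p ≤ t → t ≤ q → ¬ IsLRmax π t := by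
  simp only [SameBlock, min_eq_left h, max_eq_right h]

lemma factorIndex_lt_of_isLRmax_mem_Icc {t : Fin n} (hpq : p < q) (hpt : p ≤ t) (htq : t ≤ q)
    (ht : IsLRmax π t) : factorIndex π p < factorIndex π q := by
  have hcount := lrmaxCount_mono (π := π) hpq.le
  unfold factorIndex
  obtain rfl | hpt := hpt.eq_or_lt
  · by_cases hq : IsLRmax π q
    · have := lrmaxCount_lt_of_isLRmax hpq hq
      simp only [ht, hq, if_true]
      omega
    · simp only [ht, hq, if_true, if_false]
      omega
  · have := lrmaxCount_lt_of_isLRmax hpt ht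
    have := lrmaxCount_mono (π := π) htq
    split_ifs <;> omega

lemma factorIndex_eq_of_sameBlock (hpq : p ≤ q) (h : SameBlock π p q) :
    factorIndex π p = factorIndex π q := by
  rw [sameBlock_iff_of_le hpq] at h
  have hcount : lrmaxCount π p = lrmaxCount π q := by
    refine (lrmaxCount_mono hpq).antisymm (card_le_card fun t ht => ?_)
    simp only [mem_filter, mem_Iic] at ht ⊢
    exact ⟨not_lt.1 fun hpt => h t hpt.le ht.1 ht.2, ht.2⟩
  simp [factorIndex, hcount, h p le_rfl hpq, h q hpq le_rfl]

lemma factorIndex_lt_iff_exists_isLRmax (h : p < q) :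
    factorIndex π p < factorIndex π q ↔ ∃ t, p ≤ t ∧ t ≤ q ∧ IsLRmax π t := by
  refine ⟨fun hlt => ?_, fun ⟨t, hpt, htq, ht⟩ => factorIndex_lt_of_isLRmax_mem_Icc h hpt htq ht⟩
  by_contra! hnone
  exact hlt.ne (factorIndex_eq_of_sameBlock h.le ((sameBlock_iff_of_le h.le).2 hnone))

lemma factorIndex_eq_iff_sameBlock (hpq : p ≠ q) :
    factorIndex π p = factorIndex π q ↔ SameBlock π p q := by
  wlog hlt : p < q generalizing p q
  · rw [eq_comm, sameBlock_comm]
    exact this hpq.symm (hpq.lt_or_gt.resolve_left hlt)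
  rw [← (factorIndex_mono hlt.le).not_lt_iff_eq, factorIndex_lt_iff_exists_isLRmax hlt,
    sameBlock_iff_of_le hlt.le]
  simp only [not_exists, not_and]

lemma factorIndex_lt_of_isLRmax (h : p < q) (hp : IsLRmax π p) :
    factorIndex π p < factorIndex π q :=
  factorIndex_lt_of_isLRmax_mem_Icc h le_rfl h.le hp

lemma exists_isLRmax_lt_of_not_isLRmax (hp : ¬ IsLRmax π p) :
    ∃ m, m < p ∧ IsLRmax π m ∧ π p < π m := by
  simp only [IsLRmax, not_forall, not_lt] at hp
  obtain ⟨q, hqp, hpq⟩ := hp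
  obtain ⟨m, hm, hmax⟩ := exists_max_image (Iio p) π ⟨q, mem_Iio.2 hqp⟩
  rw [mem_Iio] at hm
  refine ⟨m, hm, fun r hr => ?_, ?_⟩
  · exact (hmax r (mem_Iio.2 (hr.trans hm))).lt_of_ne (π.injective.ne hr.ne)
  · exact (hpq.lt_of_ne (π.injective.ne hqp.ne')).trans_le (hmax q (mem_Iio.2 hqp))

end FactorIndex

section Split321

variable {n : ℕ} {π : Equiv.Perm (Fin n)}

def HasSplit321 (π : Equiv.Perm (Fin n)) : Prop :=
  ∃ a b c : Fin n, factorIndex π a < factorIndex π b ∧ factorIndex π b < factorIndex π c ∧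
    π c < π b ∧ π b < π a

lemma SortsBlocksInc.avoids321_iff {σ : Equiv.Perm (Fin n)} (hσ : SortsBlocksInc π σ) :
    Avoids321 σ ↔ ¬ HasSplit321 π := by
  obtain ⟨b, hσb, hb, hsorted⟩ := hσ
  have hfactor : ∀ p, factorIndex π (b p) = factorIndex π p := by
    intro p
    obtain hp | hp := eq_or_ne (b p) p
    · rw [hp]
    · exact ((factorIndex_eq_iff_sameBlock hp.symm).2 ((hb p).resolve_left hp)).symm
  have hfactor_symm : ∀ p, factorIndex π (b.symm p) = factorIndex π p := fun p => by
    simpa using (hfactor (b.symm p)).symm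
  have hfactor_lt : ∀ p q, p < q → σ q < σ p → factorIndex π p < factorIndex π q :=
    fun p q hpq hqp => (factorIndex_mono hpq.le).lt_of_ne fun h =>
      (hsorted p q hpq ((factorIndex_eq_iff_sameBlock hpq.ne).1 h)).asymm hqp
  rw [Avoids321, not_iff_not]
  constructor
  · rintro ⟨i, j, k, hij, hjk, hkj, hji⟩
    refine ⟨b i, b j, b k, ?_, ?_, ?_, ?_⟩
    · rw [hfactor, hfactor]; exact hfactor_lt i j hij hji
    · rw [hfactor, hfactor]; exact hfactor_lt j k hjk hkj
    · rwa [← hσb, ← hσb]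
    · rwa [← hσb, ← hσb]
  · rintro ⟨a, c, d, hac, hcd, hdc, hca⟩
    refine ⟨b.symm a, b.symm c, b.symm d, ?_, ?_, ?_, ?_⟩
    · exact factorIndex_mono.reflect_lt (by rwa [hfactor_symm, hfactor_symm])
    · exact factorIndex_mono.reflect_lt (by rwa [hfactor_symm, hfactor_symm])
    · simpa [hσb] using hdc
    · simpa [hσb] using hca

lemma Monotone.comp_perm_eq {α : Type*} [PartialOrder α] {f : Fin n → α} (hf : Monotone f)
    {e : Equiv.Perm (Fin n)} (hfe : Monotone (f ∘ e)) : f ∘ e = f :=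
  Tuple.unique_monotone (τ := Equiv.refl _) hfe hf

variable (π) in
lemma exists_sortsBlocksInc : ∃ σ, SortsBlocksInc π σ := by
  let key : Fin n → ℕ ×ₗ Fin n := fun p => toLex (factorIndex π p, π p)
  let e := Tuple.sort key
  have hkey : Monotone (key ∘ e) := Tuple.monotone_sort key
  have hfactor : factorIndex π ∘ e = factorIndex π :=
    factorIndex_mono.comp_perm_eq (Prod.Lex.monotone_fst_ofLex.comp hkey)
  refine ⟨e.trans π, e, fun p => rfl, fun p => ?_, fun p q hpq hblock => ?_⟩
  · refine or_iff_not_imp_left.2 fun hp => ?_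
    exact (factorIndex_eq_iff_sameBlock (Ne.symm hp)).1 (congrFun hfactor p).symm
  · have hpq_factor : factorIndex π (e p) = factorIndex π (e q) :=
      (congrFun hfactor p).trans
        (((factorIndex_eq_iff_sameBlock hpq.ne).2 hblock).trans (congrFun hfactor q).symm)
    have hle := (Prod.Lex.toLex_le_toLex.1 (hkey hpq.le)).resolve_left hpq_factor.not_lt
    exact hle.2.lt_of_ne ((e.trans π).injective.ne hpq.ne)

end Split321

section Satisfies

variable {n : ℕ} {π : Equiv.Perm (Fin n)}

lemma Satisfies35241.not_hasSplit321 (hπ : Satisfies35241 π) : ¬ HasSplit321 π := by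
  rintro ⟨a, b, c, hab, hbc, hcb, hba⟩
  have hab' := factorIndex_mono.reflect_lt hab
  obtain ⟨t, hbt, htc, ht⟩ := (factorIndex_lt_iff_exists_isLRmax
    (factorIndex_mono.reflect_lt hbc)).1 hbc
  have hbt' : b < t := hbt.lt_of_ne fun h => by subst h; exact (ht a hab').asymm hba
  have htc' : t < c := htc.lt_of_ne fun h => by subst h; exact (ht b hbt').asymm hcb
  obtain ⟨m, -, hmb, htm⟩ := hπ a b t c hab' hbt' htc' hcb hba (ht a (hab'.trans hbt'))
  exact (ht m (hmb.trans hbt')).asymm htm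

lemma satisfies35241_of_not_hasSplit321
    (hblock : ∀ i j k l : Fin n, i < j → j < k → k < l → SameBlock π i l →
      π l < π j → π j < π i → π i < π k → ∃ m : Fin n, i < m ∧ m < j ∧ π k < π m)
    (hsplit : ¬ HasSplit321 π) : Satisfies35241 π := by
  intro i j k l hij hjk hkl hlj hji hik
  by_cases hil : SameBlock π i l
  · exact hblock i j k l hij hjk hkl hil hlj hji hik
  by_contra! hno
  have hjl := hjk.trans hkl
  have hil' : factorIndex π i < factorIndex π l :=
    (factorIndex_mono (hij.trans hjl).le).lt_of_ne
      (mt (factorIndex_eq_iff_sameBlock (hij.trans hjl).ne).1 hil)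
  obtain hij' | hij' := (factorIndex_mono hij.le).lt_or_eq
  · obtain hjl' | hjl' := (factorIndex_mono hjl.le).lt_or_eq
    · exact hsplit ⟨i, j, l, hij', hjl', hlj, hji⟩
    -- `j, k, l` share a block, so the left-to-right maximum dominating `π k` comes before `i`
    have hk : ¬ IsLRmax π k := fun hk =>
      (factorIndex_lt_of_isLRmax_mem_Icc hjl hjk.le hkl.le hk).ne hjl'
    obtain ⟨m, hmk, hm, hkm⟩ := exists_isLRmax_lt_of_not_isLRmax hk
    have hmj : m < j := lt_of_not_ge fun hjm =>
      (factorIndex_lt_of_isLRmax_mem_Icc hjl hjm (hmk.trans hkl).le hm).ne hjl'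
    have hmi : m < i := by
      obtain hmi | rfl | him := lt_trichotomy m i
      · exact hmi
      · exact absurd hik hkm.not_gt
      · exact absurd (hno m him hmj) hkm.not_ge
    exact hsplit ⟨m, i, j, factorIndex_lt_of_isLRmax hmi hm, hij', hji, hik.trans hkm⟩
  · have hi : ¬ IsLRmax π i := fun hi => (factorIndex_lt_of_isLRmax hij hi).ne hij'
    obtain ⟨m, hmi, hm, him⟩ := exists_isLRmax_lt_of_not_isLRmax hi
    exact hsplit ⟨m, i, l, factorIndex_lt_of_isLRmax hmi hm, hil', hlj.trans hji, him⟩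

end Satisfies

theorem stmt8 (n : ℕ) (π : Equiv.Perm (Fin n)) :
    Satisfies35241 π ↔
      ((∀ i j k l : Fin n, i < j → j < k → k < l → SameBlock π i l →
          π l < π j → π j < π i → π i < π k →
          ∃ m : Fin n, i < m ∧ m < j ∧ π k < π m) ∧
        ∀ σ : Equiv.Perm (Fin n), SortsBlocksInc π σ → Avoids321 σ) := by
  obtain ⟨σ₀, hσ₀⟩ := exists_sortsBlocksInc π
  have hsorted : (∀ σ, SortsBlocksInc π σ → Avoids321 σ) ↔ ¬ HasSplit321 π :=
    ⟨fun h => hσ₀.avoids321_iff.1 (h σ₀ hσ₀), fun h σ hσ => hσ.avoids321_iff.2 h⟩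
  rw [hsorted]
  exact ⟨fun hπ => ⟨fun i j k l hij hjk hkl _ => hπ i j k l hij hjk hkl, hπ.not_hasSplit321⟩,
    fun ⟨hblock, hsplit⟩ => satisfies35241_of_not_hasSplit321 hblock hsplit⟩
end

section
/- Write a permutation π of [n] as m_1 L_1 m_2 L_2 ... m_r L_r where m_1,...,m_r are the left-to-right maxima and L_i the blocks between them. Then π avoids the dashed pattern 31-4-2 if and only if (i) each block L_i (under order-isomorphic reduction) avoids 31-4-2, and (ii) the permutation obtained from π by sorting the entries within each block L_i into decreasing order avoids the pattern 3-1-2. -/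
/-- π avoids the dashed pattern 31-4-2 (adjacency between the 3 and the 1). -/
def Avoids31d42 {n : ℕ} (π : Equiv.Perm (Fin n)) : Prop :=
  ¬ ∃ i j k l : Fin n, (j : ℕ) = (i : ℕ) + 1 ∧ j < k ∧ k < l ∧
      π j < π l ∧ π l < π i ∧ π i < π k

/-- σ is obtained from π by sorting the entries within each block
(between consecutive left-to-right maxima) into decreasing order. -/
def SortsBlocksDec {n : ℕ} (π σ : Equiv.Perm (Fin n)) : Prop :=
  ∃ b : Equiv.Perm (Fin n),
    (∀ p, σ p = π (b p)) ∧
    (∀ p, b p = p ∨ SameBlock π p (b p)) ∧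
    (∀ p q, p < q → SameBlock π p q → σ q < σ p)

namespace Stmt9Aux

variable {n : ℕ} (π : Equiv.Perm (Fin n))

lemma exists_lm (p : Fin n) :
    ∃ t : Fin n, IsLRmax π t ∧ t ≤ p ∧ ∀ q, q ≤ p → π q ≤ π t := by
  obtain ⟨t, ht, hmax⟩ := Finset.exists_max_image (Finset.Iic p) (fun q => π q)
    ⟨p, Finset.mem_Iic.2 le_rfl⟩
  refine ⟨t, ?_, Finset.mem_Iic.1 ht, fun q hq => hmax q (Finset.mem_Iic.2 hq)⟩
  intro r hr
  have hle : π r ≤ π t := hmax r (Finset.mem_Iic.2 (hr.le.trans (Finset.mem_Iic.1 ht)))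
  exact lt_of_le_of_ne hle (fun h => absurd (π.injective h) hr.ne)

/-- the position at or before `p` carrying the running maximum (a LR maximum). -/
noncomputable def lm (p : Fin n) : Fin n := (exists_lm π p).choose

lemma lm_isLRmax (p : Fin n) : IsLRmax π (lm π p) := (exists_lm π p).choose_spec.1

lemma lm_le (p : Fin n) : lm π p ≤ p := (exists_lm π p).choose_spec.2.1

lemma pi_le_lm {q p : Fin n} (h : q ≤ p) : π q ≤ π (lm π p) :=
  (exists_lm π p).choose_spec.2.2 q h

lemma pi_lt_lm {q p : Fin n} (h : q ≤ p) (hne : q ≠ lm π p) : π q < π (lm π p) :=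
  lt_of_le_of_ne (pi_le_lm π h) (fun h2 => hne (π.injective h2))

lemma le_lm {u p : Fin n} (hu : IsLRmax π u) (h : u ≤ p) : u ≤ lm π p := by
  by_contra hno
  push_neg at hno
  exact absurd (pi_le_lm π h) (not_le.2 (hu _ hno))

lemma lm_mono {p q : Fin n} (h : p ≤ q) : lm π p ≤ lm π q :=
  le_lm π (lm_isLRmax π p) ((lm_le π p).trans h)

lemma lm_of_isLRmax {p : Fin n} (hp : IsLRmax π p) : lm π p = p :=
  le_antisymm (lm_le π p) (le_lm π hp le_rfl)

lemma sameBlock_lm_eq {p q : Fin n} (h : SameBlock π p q) : lm π p = lm π q := by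
  have key : ∀ a b : Fin n, SameBlock π a b → lm π a ≤ lm π b := by
    intro a b hab
    have hlt : lm π a < min a b := by
      by_contra hle
      push_neg at hle
      exact hab _ hle ((lm_le π a).trans (le_max_left a b)) (lm_isLRmax π a)
    exact le_lm π (lm_isLRmax π a) (hlt.le.trans (min_le_right a b))
  refine le_antisymm (key p q h) (key q p ?_)
  intro t h1 h2
  exact h t (by rwa [min_comm]) (by rwa [max_comm])

lemma b_lm {b : Equiv.Perm (Fin n)} (hb2 : ∀ p, b p = p ∨ SameBlock π p (b p)) (p : Fin n) :
    lm π (b p) = lm π p := by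
  rcases hb2 p with h | h
  · rw [h]
  · exact (sameBlock_lm_eq π h).symm

lemma b_fix {b : Equiv.Perm (Fin n)} (hb2 : ∀ p, b p = p ∨ SameBlock π p (b p))
    {p : Fin n} (hp : IsLRmax π p) : b p = p := by
  rcases hb2 p with h | h
  · exact h
  · exact absurd hp (h p (min_le_left _ _) (le_max_left _ _))

lemma cross (g : ℕ → ℕ) (w : ℕ) :
    ∀ d a c : ℕ, c - a ≤ d → a ≤ c → w < g a → g c < w →
      ∃ i, a ≤ i ∧ i < c ∧ w < g i ∧ g (i + 1) ≤ w := by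
  intro d
  induction d with
  | zero =>
    intro a c h1 h2 h3 h4
    have : a = c := by omega
    subst this
    omega
  | succ d ih =>
    intro a c h1 h2 h3 h4
    have hac : a < c := by
      rcases eq_or_lt_of_le h2 with h | h
      · subst h; omega
      · exact h
    by_cases h5 : w < g (a + 1)
    · obtain ⟨i, hi1, hi2, hi3, hi4⟩ := ih (a + 1) c (by omega) (by omega) h5 h4
      exact ⟨i, by omega, hi2, hi3, hi4⟩
    · exact ⟨a, le_rfl, hac, h3, by omega⟩

lemma forward (hπ : Avoids31d42 π) (σ : Equiv.Perm (Fin n))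
    (hs : SortsBlocksDec π σ) : Avoids312 σ := by
  obtain ⟨b, hb1, hb2, hb3⟩ := hs
  rintro ⟨x, y, z, hxy, hyz, hvw, hwu⟩
  have hblm : ∀ p, lm π (b p) = lm π p := b_lm π hb2
  -- step 1 : lm y < lm z
  have htyz : lm π y < lm π z := by
    have hle : lm π y ≤ lm π z := lm_mono π hyz.le
    rcases lt_or_eq_of_le hle with h | heq
    · exact h
    · exfalso
      by_cases hy : IsLRmax π y
      · have hσy : σ y = π y := by rw [hb1, b_fix π hb2 hy]
        have h1 : lm π (b z) = y := by rw [hblm, ← heq, lm_of_isLRmax π hy]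
        have hbzy : b z ≠ y := by
          intro h
          exact absurd (b.injective (h.trans (b_fix π hb2 hy).symm)) (ne_of_gt hyz)
        have h2 : π (b z) < π y := by
          have h3 := pi_lt_lm π (le_refl (b z)) (by rw [h1]; exact hbzy)
          rwa [h1] at h3
        rw [← hb1, ← hσy] at h2
        exact absurd hvw (asymm h2)
      · have hsb : SameBlock π y z := by
          intro u hu1 hu2 hLR
          rw [min_eq_left hyz.le] at hu1
          rw [max_eq_right hyz.le] at hu2
          have hlu : lm π u = u := lm_of_isLRmax π hLR
          have e1 : lm π y ≤ u := by have := lm_mono π hu1; rwa [hlu] at this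
          have e2 : u ≤ lm π y := by have := lm_mono π hu2; rwa [hlu, ← heq] at this
          have e3 : u = y := le_antisymm (e2.trans (lm_le π y)) hu1
          exact hy (e3 ▸ hLR)
        exact absurd (hb3 y z hyz hsb) (asymm hvw)
  -- step 2 : π (b z) < π (lm y)
  have hwty : π (b z) < π (lm π y) := by
    have h1 : σ x ≤ π (lm π y) := by
      rw [hb1]
      have h2 : lm π (b x) ≤ lm π y := by rw [hblm]; exact lm_mono π hxy.le
      have h3 : π (b x) ≤ π (lm π (b x)) := pi_le_lm π (le_refl (b x))
      have h4 : π (lm π (b x)) ≤ π (lm π y) := by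
        have h5 := pi_le_lm π (p := lm π y) h2
        rwa [lm_of_isLRmax π (lm_isLRmax π y)] at h5
      exact h3.trans h4
    have h6 := lt_of_lt_of_le hwu h1
    rwa [hb1] at h6
  -- step 3 : lm y ≤ b y < lm z
  have htyby : lm π y ≤ b y := by
    have := lm_le π (b y)
    rwa [hblm] at this
  have hbytz : b y < lm π z := by
    by_contra h
    push_neg at h
    have h1 : lm π z ≤ lm π y := by
      have := le_lm π (lm_isLRmax π z) h
      rwa [hblm] at this
    exact absurd htyz (not_lt.2 h1)
  -- step 4 : lm z < b z
  have hbzne : b z ≠ lm π z := by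
    intro h
    have hzLR : IsLRmax π (lm π z) := lm_isLRmax π z
    have h1 : b (lm π z) = lm π z := b_fix π hb2 hzLR
    have h2 : z = lm π z := b.injective (h.trans h1.symm)
    have h3 : π (lm π y) < π z := by
      have := hzLR (lm π y) htyz
      rwa [← h2] at this
    rw [h, ← h2] at hwty
    exact absurd (hwty.trans h3) (lt_irrefl _)
  have hbz : lm π z < b z := by
    refine lt_of_le_of_ne ?_ (Ne.symm hbzne)
    have := lm_le π (b z)
    rwa [hblm] at this
  -- crossing argument
  set w : ℕ := (π (b z) : ℕ) with hw
  set g : ℕ → ℕ := fun u => if h : u < n then (π ⟨u, h⟩ : ℕ) else 0 with hg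
  have ha : w < g ((lm π y) : ℕ) := by
    have h1 : g ((lm π y) : ℕ) = (π (lm π y) : ℕ) := by
      simp only [hg, (lm π y).isLt, dif_pos, Fin.eta]
    rw [h1]
    exact Fin.lt_def.1 hwty
  have hc : g ((b y) : ℕ) < w := by
    have h1 : g ((b y) : ℕ) = (π (b y) : ℕ) := by
      simp only [hg, (b y).isLt, dif_pos, Fin.eta]
    rw [h1]
    have h2 : σ y < σ z := hvw
    rw [hb1, hb1] at h2
    exact Fin.lt_def.1 h2
  obtain ⟨iN, hi1, hi2, hi3, hi4⟩ := cross g w (((b y) : ℕ) - ((lm π y) : ℕ))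
    ((lm π y) : ℕ) ((b y) : ℕ) le_rfl (Fin.le_def.1 htyby) ha hc
  have hbyval : ((b y) : ℕ) < ((lm π z) : ℕ) := Fin.lt_def.1 hbytz
  have hbzval : ((lm π z) : ℕ) < ((b z) : ℕ) := Fin.lt_def.1 hbz
  have hiln : iN < n := hi2.trans (b y).isLt
  have hjln : iN + 1 < n := by
    have := (b z).isLt
    omega
  set i' : Fin n := (⟨iN, hiln⟩ : Fin n) with hi'
  set j' : Fin n := (⟨iN + 1, hjln⟩ : Fin n) with hj'
  have hg1 : w < (π i' : ℕ) := by
    have h1 : g iN = (π i' : ℕ) := by simp only [hg, dif_pos hiln, hi']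
    rwa [h1] at hi3
  have hg2 : (π j' : ℕ) ≤ w := by
    have h1 : g (iN + 1) = (π j' : ℕ) := by simp only [hg, dif_pos hjln, hj']
    rwa [h1] at hi4
  have hi'v : (i' : ℕ) = iN := rfl
  have hj'v : (j' : ℕ) = iN + 1 := rfl
  have hjne : (π j' : ℕ) ≠ (π (b z) : ℕ) := by
    intro h
    have h1 : j' = b z := π.injective (Fin.val_injective h)
    have h2 : (j' : ℕ) = ((b z) : ℕ) := congrArg Fin.val h1
    omega
  apply hπ
  refine ⟨i', j', lm π z, b z, ?_, ?_, hbz, ?_, ?_, ?_⟩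
  · omega
  · rw [Fin.lt_def]
    omega
  · rw [Fin.lt_def]
    omega
  · rw [Fin.lt_def]
    omega
  · refine lm_isLRmax π z i' ?_
    rw [Fin.lt_def]
    omega

/-! ### the canonical block-decreasing sort -/

/-- sorting key: primary = block (last LR max position), secondary = reversed value. -/
noncomputable def key : Fin n → ℕ := fun x => n * (lm π x : ℕ) + (n - 1 - (π x : ℕ))

lemma key_div (x : Fin n) : key π x / n = (lm π x : ℕ) := by
  have h0 : 0 < n := x.pos
  have hr : n - 1 - (π x : ℕ) < n := by have := (π x).isLt; omega
  rw [key, Nat.mul_add_div h0, Nat.div_eq_of_lt hr, add_zero]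

lemma key_inj : Function.Injective (key π) := by
  intro x y h
  have h1 : (lm π x : ℕ) = (lm π y : ℕ) := by rw [← key_div π x, ← key_div π y, h]
  have h2 : (π x : ℕ) = (π y : ℕ) := by
    have hx := (π x).isLt
    have hy := (π y).isLt
    rw [key, key, h1] at h
    have h3 := Nat.add_left_cancel h
    omega
  exact π.injective (Fin.val_injective h2)

/-- the canonical within-block decreasing sorting permutation. -/
noncomputable def bc : Equiv.Perm (Fin n) := Tuple.sort (key π)

lemma bc_strict : StrictMono (fun p => key π (bc π p)) :=
  (Tuple.monotone_sort (key π)).strictMono_of_injective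
    ((key_inj π).comp (bc π).injective)

lemma bc_lm (p : Fin n) : lm π (bc π p) = lm π p := by
  have h1 : Monotone ((fun x : Fin n => ((lm π x : ℕ))) ∘ (bc π)) := by
    intro p q hpq
    simp only [Function.comp]
    rw [← key_div, ← key_div]
    exact Nat.div_le_div_right (Tuple.monotone_sort (key π) hpq)
  have h2 : Monotone ((fun x : Fin n => ((lm π x : ℕ))) ∘ (Equiv.refl (Fin n))) := by
    intro p q hpq
    simp only [Function.comp, Equiv.refl_apply]
    exact Fin.le_def.1 (lm_mono π hpq)
  have h3 := Tuple.unique_monotone h1 h2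
  have h4 := congrFun h3 p
  simp only [Function.comp, Equiv.refl_apply] at h4
  exact Fin.val_injective h4

lemma bc_dec {p q : Fin n} (hpq : p < q) (hlm : lm π p = lm π q) :
    π (bc π q) < π (bc π p) := by
  have h1 : key π (bc π p) < key π (bc π q) := bc_strict π hpq
  have h2 : (lm π (bc π p) : ℕ) = (lm π (bc π q) : ℕ) := by
    rw [bc_lm, bc_lm, hlm]
  rw [key, key, h2] at h1
  have h3 := Nat.lt_of_add_lt_add_left h1
  have hx := (π (bc π p)).isLt
  have hy := (π (bc π q)).isLt
  rw [Fin.lt_def]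
  omega

lemma bc_fixLR {p : Fin n} (hp : IsLRmax π p) : bc π p = p := by
  by_contra hne
  have h1 : lm π (bc π p) = p := by rw [bc_lm, lm_of_isLRmax π hp]
  have h2 : p < bc π p := by
    refine lt_of_le_of_ne ?_ (Ne.symm hne)
    have := lm_le π (bc π p)
    rwa [h1] at this
  have h3 : π (bc π p) < π p := by
    have h4 := pi_lt_lm π (le_refl (bc π p)) (by rw [h1]; exact hne)
    rwa [h1] at h4
  have hq : bc π ((bc π).symm p) = p := Equiv.apply_symm_apply _ _
  have h4 : lm π ((bc π).symm p) = p := by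
    have h5 := bc_lm π ((bc π).symm p)
    rw [hq, lm_of_isLRmax π hp] at h5
    exact h5.symm
  have h5 : p < (bc π).symm p := by
    refine lt_of_le_of_ne ?_ ?_
    · have := lm_le π ((bc π).symm p)
      rwa [h4] at this
    · intro h
      exact hne (by rw [← h] at hq; exact hq)
  have h6 := bc_dec π h5 (by rw [lm_of_isLRmax π hp, h4])
  rw [hq] at h6
  exact absurd h3 (asymm h6)

lemma canonical_sorts : SortsBlocksDec π ((bc π).trans π) := by
  refine ⟨bc π, fun p => rfl, ?_, ?_⟩
  · intro p
    by_cases h : bc π p = p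
    · exact Or.inl h
    · refine Or.inr ?_
      have hlm : lm π (bc π p) = lm π p := bc_lm π p
      have hpne : p ≠ lm π p := by
        intro he
        exact h (bc_fixLR π (by rw [he]; exact lm_isLRmax π p))
      have hp1 : lm π p < p := lt_of_le_of_ne (lm_le π p) hpne.symm
      have hp2 : lm π p < bc π p := by
        refine lt_of_le_of_ne ?_ ?_
        · have := lm_le π (bc π p)
          rwa [hlm] at this
        · intro he
          have h1 : bc π (lm π p) = lm π p := bc_fixLR π (lm_isLRmax π p)
          exact hpne ((bc π).injective (by rw [h1, ← he])).symm
      intro u hu1 hu2 hLR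
      have hmaxlm : lm π (max p (bc π p)) = lm π p := by
        rcases max_cases p (bc π p) with ⟨h5, _⟩ | ⟨h5, _⟩ <;> rw [h5]
        exact hlm
      have hminlm : lm π (min p (bc π p)) = lm π p := by
        rcases min_cases p (bc π p) with ⟨h5, _⟩ | ⟨h5, _⟩ <;> rw [h5]
        exact hlm
      have e1 : lm π u ≤ lm π p := hmaxlm ▸ lm_mono π hu2
      have e2 : lm π p ≤ lm π u := hminlm ▸ lm_mono π hu1
      have e3 : lm π u = lm π p := le_antisymm e1 e2
      have hminl : lm π p < min p (bc π p) := lt_min hp1 hp2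
      have : lm π u ≠ u := by
        rw [e3]
        exact ne_of_lt (lt_of_lt_of_le hminl hu1)
      exact this (lm_of_isLRmax π hLR)
  · intro p q hpq hsb
    have h1 := bc_dec π hpq (sameBlock_lm_eq π hsb)
    simpa [Equiv.trans_apply] using h1

lemma backward
    (hA : ¬ ∃ i j k l : Fin n, (j : ℕ) = (i : ℕ) + 1 ∧ j < k ∧ k < l ∧
        SameBlock π i l ∧ π j < π l ∧ π l < π i ∧ π i < π k)
    (hB : ∀ σ : Equiv.Perm (Fin n), SortsBlocksDec π σ → Avoids312 σ) :
    Avoids31d42 π := by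
  rintro ⟨i, j, k, l, hji, hjk, hkl, h1, h2, h3⟩
  have hij : i < j := by rw [Fin.lt_def]; omega
  have hil : i < l := hij.trans (hjk.trans hkl)
  have hSB : ¬ SameBlock π i l := fun h => hA ⟨i, j, k, l, hji, hjk, hkl, h, h1, h2, h3⟩
  rw [SameBlock] at hSB
  push_neg at hSB
  obtain ⟨t, ht1, ht2, ht3⟩ := hSB
  rw [min_eq_left hil.le] at ht1
  rw [max_eq_right hil.le] at ht2
  obtain ⟨s, hs1, hs2, hs3⟩ : ∃ s, IsLRmax π s ∧ i < s ∧ s ≤ l := by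
    rcases eq_or_lt_of_le ht1 with he | hlt
    · have hiLR : IsLRmax π i := by rw [he]; exact ht3
      refine ⟨lm π k, lm_isLRmax π k, ?_, (lm_le π k).trans hkl.le⟩
      by_contra hno
      push_neg at hno
      have h4 : π k ≤ π i := by
        have h5 := pi_le_lm π (le_refl k)
        have h6 : π (lm π k) ≤ π i := by
          rcases eq_or_lt_of_le hno with he2 | hlt2
          · rw [he2]
          · exact (hiLR _ hlt2).le
        exact h5.trans h6
      exact absurd h3 (not_lt.2 h4)
    · exact ⟨t, ht3, hlt, ht2⟩
  have hAv := hB ((bc π).trans π) (canonical_sorts π)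
  apply hAv
  have hval : ∀ p, ((bc π).trans π) ((bc π).symm p) = π p := fun p => by
    simp [Equiv.trans_apply]
  have hlmsymm : ∀ p, lm π ((bc π).symm p) = lm π p := fun p => by
    have h4 := bc_lm π ((bc π).symm p)
    rw [Equiv.apply_symm_apply] at h4
    exact h4.symm
  have hjnotLR : ¬ IsLRmax π j := fun h => absurd (h i hij) (asymm (h1.trans h2))
  have hlmji : lm π j = lm π i := by
    have ha : lm π j ≤ i := by
      have h4 : lm π j ≠ j := fun he => hjnotLR (by rw [← he]; exact lm_isLRmax π j)
      have h5 : lm π j < j := lt_of_le_of_ne (lm_le π j) h4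
      rw [Fin.le_def]
      have h6 := Fin.lt_def.1 h5
      omega
    exact le_antisymm (le_lm π (lm_isLRmax π j) ha) (lm_mono π hij.le)
  have hne_uv : (bc π).symm i ≠ (bc π).symm j :=
    fun h => absurd ((bc π).symm.injective h) (ne_of_lt hij)
  have huv : (bc π).symm i < (bc π).symm j := by
    rcases lt_trichotomy ((bc π).symm i) ((bc π).symm j) with h | h | h
    · exact h
    · exact absurd h hne_uv
    · exfalso
      have h4 := bc_dec π h (by rw [hlmsymm, hlmsymm, hlmji])
      rw [Equiv.apply_symm_apply, Equiv.apply_symm_apply] at h4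
      exact absurd (h1.trans h2) (asymm h4)
  have hvw : (bc π).symm j < (bc π).symm l := by
    by_contra hno
    push_neg at hno
    have e1 : lm π l ≤ lm π j := by
      have h4 := lm_mono π hno
      rwa [hlmsymm, hlmsymm] at h4
    have e2 : s ≤ lm π l := le_lm π hs1 hs3
    have e3 : lm π j ≤ i := by rw [hlmji]; exact lm_le π i
    have : s ≤ i := e2.trans (e1.trans e3)
    exact absurd hs2 (not_lt.2 this)
  refine ⟨(bc π).symm i, (bc π).symm j, (bc π).symm l, huv, hvw, ?_, ?_⟩
  · rw [hval, hval]; exact h1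
  · rw [hval, hval]; exact h2

end Stmt9Aux

theorem stmt9 (n : ℕ) (π : Equiv.Perm (Fin n)) :
    Avoids31d42 π ↔
      ((¬ ∃ i j k l : Fin n, (j : ℕ) = (i : ℕ) + 1 ∧ j < k ∧ k < l ∧
          SameBlock π i l ∧ π j < π l ∧ π l < π i ∧ π i < π k) ∧
        ∀ σ : Equiv.Perm (Fin n), SortsBlocksDec π σ → Avoids312 σ) := by
  constructor
  · intro hπ
    constructor
    · rintro ⟨i, j, k, l, a, b, c, _, d, e, f⟩
      exact hπ ⟨i, j, k, l, a, b, c, d, e, f⟩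
    · exact Stmt9Aux.forward π hπ
  · rintro ⟨hA, hB⟩
    exact Stmt9Aux.backward π hA hB
end

section
/- For every valid LRmax specification (P,M) for [n], the minimal permutation (filling non-LRmax positions left to right with the smallest unused values) is a well-defined permutation of [n] whose LRmax specification is exactly (P,M). -/
open Finset in
lemma card_filter_lt_iso {α : Type*} [LinearOrder α] [DecidableEq α] {c : ℕ} {s : Finset α}
    (e : Fin c ≃o {x // x ∈ s}) (k : Fin c) :
    (s.filter (fun x => x < (e k : α))).card = k := by
  classical
  have himg : s.filter (fun x => x < (e k : α))
      = (Finset.Iio k).image (fun j => ((e j : {x // x ∈ s}) : α)) := by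
    ext x
    simp only [mem_filter, mem_image, mem_Iio]
    constructor
    · rintro ⟨hxs, hxlt⟩
      refine ⟨e.symm ⟨x, hxs⟩, ?_, by simp⟩
      rw [← e.lt_iff_lt, e.apply_symm_apply]
      exact Subtype.mk_lt_mk.mpr hxlt
    · rintro ⟨j, hj, rfl⟩
      exact ⟨(e j).2, Subtype.mk_lt_mk.mp (e.lt_iff_lt.mpr hj)⟩
  rw [himg, Finset.card_image_of_injective _ (fun a b hab => e.injective (Subtype.ext hab)),
    Fin.card_Iio]



/-- π is the minimal permutation for the specification (P, M): the LRmax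
values M sit at the positions P, and every other position carries the
smallest element of [n] not used at earlier positions. -/
def IsMinFill {n r : ℕ} (π : Equiv.Perm (Fin n)) (P M : Fin r → Fin n) : Prop :=
  (∀ i, π (P i) = M i) ∧
  ∀ p : Fin n, p ∉ Set.range P →
    ∀ v : Fin n, (∀ q, q < p → π q ≠ v) → π p ≤ v

theorem stmt14 (n r : ℕ) (hn : 0 < n) (hr : 0 < r) (P M : Fin r → Fin n)
    (hP : StrictMono P) (hM : StrictMono M)
    (hP1 : P ⟨0, hr⟩ = ⟨0, hn⟩)
    (hMr : (M ⟨r - 1, Nat.sub_lt hr one_pos⟩ : ℕ) = n - 1)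
    (hPM : ∀ i, P i ≤ M i)
    (hstep : ∀ i : ℕ, ∀ h : i + 1 < r,
      (P ⟨i + 1, h⟩ : ℕ) ≤ (M ⟨i, Nat.lt_of_succ_lt h⟩ : ℕ) + 1) :
    (∃! π : Equiv.Perm (Fin n), IsMinFill π P M) ∧
    ∀ π : Equiv.Perm (Fin n), IsMinFill π P M → IsLRmaxSpec π P M := by
  classical
  have hPinj : Function.Injective P := hP.injective
  have hMinj : Function.Injective M := hM.injective
  -- Uniqueness of the minimal fill
  have huniq : ∀ π π' : Equiv.Perm (Fin n), IsMinFill π P M → IsMinFill π' P M → π = π' := by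
    intro π π' hπ hπ'
    suffices h : ∀ p : Fin n, π p = π' p from Equiv.ext h
    have key : ∀ m : ℕ, ∀ p : Fin n, (p : ℕ) = m → π p = π' p := by
      intro m
      induction m using Nat.strong_induction_on with
      | _ m ih =>
      rintro p rfl
      have ihp : ∀ q : Fin n, q < p → π q = π' q := fun q hq => ih q (Fin.lt_def.mp hq) q rfl
      by_cases hp : ∃ i, P i = p
      · obtain ⟨i, rfl⟩ := hp
        rw [hπ.1 i, hπ'.1 i]
      · have h1 : π p ≤ π' p := by
          refine hπ.2 p (by simpa [Set.mem_range] using hp) (π' p) ?_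
          intro q hq
          rw [ihp q hq]
          exact fun h => (ne_of_lt hq) (π'.injective h)
        have h2 : π' p ≤ π p := by
          refine hπ'.2 p (by simpa [Set.mem_range] using hp) (π p) ?_
          intro q hq
          rw [← ihp q hq]
          exact fun h => (ne_of_lt hq) (π.injective h)
        exact le_antisymm h1 h2
    exact fun p => key p p rfl
  -- Setup for existence
  have hrn : r ≤ n := by
    have := Fintype.card_le_of_injective P hPinj
    simpa using this
  set Pset : Finset (Fin n) := Finset.univ.image P with hPsetdef
  set Mset : Finset (Fin n) := Finset.univ.image M with hMsetdef
  have hPcard : Psetᶜ.card = n - r := by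
    rw [Finset.card_compl, hPsetdef, Finset.card_image_of_injective _ hPinj]
    simp
  have hMcard : Msetᶜ.card = n - r := by
    rw [Finset.card_compl, hMsetdef, Finset.card_image_of_injective _ hMinj]
    simp
  set pIso := Psetᶜ.orderIsoOfFin hPcard with hpIsodef
  set sIso := Msetᶜ.orderIsoOfFin hMcard with hsIsodef
  have hmemP : ∀ p : Fin n, ¬(∃ i, P i = p) → p ∈ Psetᶜ := by
    intro p h
    rw [Finset.mem_compl, hPsetdef]
    intro hc
    simp only [Finset.mem_image, Finset.mem_univ, true_and] at hc
    exact h hc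
  set f : Fin n → Fin n := fun p =>
    if h : ∃ i, P i = p then M h.choose
    else (sIso (pIso.symm ⟨p, hmemP p h⟩) : Fin n) with hfdef
  have hfP : ∀ i, f (P i) = M i := by
    intro i
    have h : ∃ j, P j = P i := ⟨i, rfl⟩
    rw [hfdef]
    simp only [dif_pos h]
    exact congrArg M (hPinj h.choose_spec)
  have hfnP : ∀ p : Fin n, (h : ¬∃ i, P i = p) → f p = (sIso (pIso.symm ⟨p, hmemP p h⟩) : Fin n) := by
    intro p h
    rw [hfdef]
    simp only [dif_neg h]
  have hfS : ∀ p : Fin n, (¬∃ i, P i = p) → f p ∈ Msetᶜ := by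
    intro p h
    rw [hfnP p h]
    exact (sIso _).2
  -- f is injective
  have hinj : Function.Injective f := by
    intro a b hab
    by_cases ha : ∃ i, P i = a <;> by_cases hb : ∃ i, P i = b
    · obtain ⟨i, rfl⟩ := ha; obtain ⟨j, rfl⟩ := hb
      rw [hfP, hfP] at hab
      exact congrArg P (hMinj hab)
    · exfalso
      obtain ⟨i, rfl⟩ := ha
      have h1 : f (P i) ∈ Mset := by
        rw [hfP]; exact Finset.mem_image_of_mem M (Finset.mem_univ i)
      have h2 := hfS b hb
      rw [hab] at h1
      exact (Finset.mem_compl.mp h2) h1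
    · exfalso
      obtain ⟨j, rfl⟩ := hb
      have h1 : f (P j) ∈ Mset := by
        rw [hfP]; exact Finset.mem_image_of_mem M (Finset.mem_univ j)
      have h2 := hfS a ha
      rw [← hab] at h1
      exact (Finset.mem_compl.mp h2) h1
    · rw [hfnP a ha, hfnP b hb] at hab
      have := pIso.symm.injective (sIso.injective (Subtype.ext hab))
      exact congrArg Subtype.val this
  set π : Equiv.Perm (Fin n) := Equiv.ofBijective f (Finite.injective_iff_bijective.mp hinj) with hπdef
  have hπf : ∀ p, π p = f p := fun p => rfl
  -- index is at most value, for strictly monotone P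
  have hlePj : ∀ j : Fin r, (j : ℕ) ≤ (P j : ℕ) := by
    intro j
    have h1 : ((Finset.Iic j).image P).card ≤ (Finset.Iic (P j)).card := by
      apply Finset.card_le_card
      intro x hx
      simp only [Finset.mem_image, Finset.mem_Iic] at hx ⊢
      obtain ⟨k, hk, rfl⟩ := hx
      exact hP.monotone hk
    rwa [Finset.card_image_of_injective _ hPinj, Fin.card_Iic, Fin.card_Iic,
      Nat.add_le_add_iff_right] at h1
  -- every non-LRmax position has a largest LRmax position before it
  have hexmax : ∀ p : Fin n, (¬∃ i, P i = p) → ∃ i : Fin r, P i < p ∧ ∀ j, P j < p → j ≤ i := by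
    intro p hp
    have hp0 : (0 : ℕ) < (p : ℕ) := by
      rcases Nat.eq_zero_or_pos (p : ℕ) with h | h
      · exact absurd ⟨⟨0, hr⟩, by rw [hP1]; exact (Fin.ext h.symm)⟩ hp
      · exact h
    set T := Finset.univ.filter (fun j => P j < p) with hT
    have hne : T.Nonempty := by
      refine ⟨⟨0, hr⟩, ?_⟩
      simp only [hT, Finset.mem_filter, Finset.mem_univ, true_and, hP1]
      exact Fin.lt_def.mpr (by simpa using hp0)
    refine ⟨T.max' hne, ?_, ?_⟩
    · have := T.max'_mem hne
      simpa [hT] using this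
    · intro j hj
      exact T.le_max' j (by simp [hT, hj])
  -- the position is at most the value of the preceding LRmax
  have hpleM : ∀ p : Fin n, (¬∃ i, P i = p) → ∀ i : Fin r, P i < p → (∀ j, P j < p → j ≤ i) →
      (p : ℕ) ≤ (M i : ℕ) := by
    intro p hp i hi hmax
    by_cases hi1 : (i : ℕ) + 1 < r
    · have h1 : p < P ⟨(i : ℕ) + 1, hi1⟩ := by
        rcases lt_trichotomy (P ⟨(i : ℕ) + 1, hi1⟩) p with h | h | h
        · have h2 := hmax _ h
          have h3 : ((i : ℕ) + 1) ≤ (i : ℕ) := Fin.le_def.mp h2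
          omega
        · exact absurd ⟨_, h⟩ hp
        · exact h
      have h2 := hstep (i : ℕ) hi1
      have h3 : (⟨(i : ℕ), Nat.lt_of_succ_lt hi1⟩ : Fin r) = i := Fin.ext rfl
      rw [h3] at h2
      have h4 := Fin.lt_def.mp h1
      omega
    · have hieq : (i : ℕ) = r - 1 := by have := i.isLt; omega
      have h5 : (M i : ℕ) = n - 1 := by
        rw [show i = ⟨r - 1, Nat.sub_lt hr one_pos⟩ from Fin.ext hieq]
        exact hMr
      have := p.isLt
      omega
  -- key counting bound: the fill value is at most the preceding LRmax value
  have hbound : ∀ p : Fin n, (hp : ¬∃ i, P i = p) → ∀ i : Fin r, P i < p → (∀ j, P j < p → j ≤ i) →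
      f p ≤ M i := by
    intro p hp i hi hmax
    by_contra hc
    push_neg at hc
    set k := pIso.symm ⟨p, hmemP p hp⟩ with hk
    have hfpk : f p = (sIso k : Fin n) := hfnP p hp
    have hkcard : (Psetᶜ.filter (fun x => x < p)).card = (k : ℕ) := by
      have h1 := card_filter_lt_iso pIso k
      rw [hk, pIso.apply_symm_apply] at h1
      exact h1
    -- positions side
    have hpos : Psetᶜ.filter (fun x => x < p) = Finset.Iio p \ Pset := by
      ext x
      simp only [Finset.mem_filter, Finset.mem_compl, Finset.mem_sdiff, Finset.mem_Iio]
      tauto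
    have hPin : Finset.Iio p ∩ Pset = (Finset.Iic i).image P := by
      ext x
      simp only [Finset.mem_inter, Finset.mem_Iio, hPsetdef, Finset.mem_image,
        Finset.mem_univ, true_and, Finset.mem_Iic]
      constructor
      · rintro ⟨hxp, j, rfl⟩
        exact ⟨j, hmax j hxp, rfl⟩
      · rintro ⟨j, hj, rfl⟩
        exact ⟨lt_of_le_of_lt (hP.monotone hj) hi, j, rfl⟩
    have hc1 : ((Finset.Iio p ∩ Pset).card) + ((Finset.Iio p \ Pset).card) = (p : ℕ) := by
      rw [Finset.card_inter_add_card_sdiff, Fin.card_Iio]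
    rw [hPin, Finset.card_image_of_injective _ hPinj, Fin.card_Iic] at hc1
    -- values side
    have hvsub : Msetᶜ.filter (fun x => x ≤ M i) ⊆ Msetᶜ.filter (fun x => x < (sIso k : Fin n)) := by
      intro x hx
      simp only [Finset.mem_filter] at hx ⊢
      exact ⟨hx.1, lt_of_le_of_lt hx.2 (hfpk ▸ hc)⟩
    have hvcard := card_filter_lt_iso sIso k
    have hle := Finset.card_le_card hvsub
    rw [hvcard] at hle
    have hval2 : Msetᶜ.filter (fun x => x ≤ M i) = Finset.Iic (M i) \ Mset := by
      ext x
      simp only [Finset.mem_filter, Finset.mem_compl, Finset.mem_sdiff, Finset.mem_Iic]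
      tauto
    have hMin : Finset.Iic (M i) ∩ Mset = (Finset.Iic i).image M := by
      ext x
      simp only [Finset.mem_inter, Finset.mem_Iic, hMsetdef, Finset.mem_image,
        Finset.mem_univ, true_and]
      constructor
      · rintro ⟨hxm, j, rfl⟩
        exact ⟨j, hM.le_iff_le.mp hxm, rfl⟩
      · rintro ⟨j, hj, rfl⟩
        exact ⟨hM.monotone hj, j, rfl⟩
    have hc2 : ((Finset.Iic (M i) ∩ Mset).card) + ((Finset.Iic (M i) \ Mset).card) = (M i : ℕ) + 1 := by
      rw [Finset.card_inter_add_card_sdiff, Fin.card_Iic]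
    rw [hMin, Finset.card_image_of_injective _ hMinj, Fin.card_Iic] at hc2
    rw [hval2] at hle
    rw [hpos] at hkcard
    have hple := hpleM p hp i hi hmax
    have hiP : (i : ℕ) < (p : ℕ) := lt_of_le_of_lt (hlePj i) (Fin.lt_def.mp hi)
    omega
  -- MinFill
  have hMF : IsMinFill π P M := by
    refine ⟨fun i => hfP i, ?_⟩
    intro p hp v hv
    have hp' : ¬∃ i, P i = p := fun ⟨i, hi⟩ => hp ⟨i, hi⟩
    obtain ⟨i, hi, hmax⟩ := hexmax p hp'
    by_cases hvM : v ∈ Mset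
    · rw [hMsetdef] at hvM
      simp only [Finset.mem_image, Finset.mem_univ, true_and] at hvM
      obtain ⟨j, rfl⟩ := hvM
      by_cases hji : j ≤ i
      · exact absurd (by rw [hπf, hfP]) (hv (P j) (lt_of_le_of_lt (hP.monotone hji) hi))
      · have hij : i < j := not_le.mp hji
        rw [hπf]
        exact le_trans (hbound p hp' i hi hmax) (le_of_lt (hM hij))
    · have hvS : v ∈ Msetᶜ := Finset.mem_compl.mpr hvM
      by_contra hcon
      push_neg at hcon
      rw [hπf] at hcon
      set m := sIso.symm ⟨v, hvS⟩ with hm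
      set k := pIso.symm ⟨p, hmemP p hp'⟩ with hk
      have hfpk : f p = (sIso k : Fin n) := hfnP p hp'
      have hmk : m < k := by
        have h1 : sIso m < sIso k := by
          rw [hm, sIso.apply_symm_apply]
          exact Subtype.mk_lt_mk.mpr (hfpk ▸ hcon)
        exact sIso.lt_iff_lt.mp h1
      set q := pIso m with hq
      have hqp : (q : Fin n) < p := by
        have h1 : pIso m < pIso k := pIso.lt_iff_lt.mpr hmk
        rw [hk, pIso.apply_symm_apply] at h1
        exact Subtype.mk_lt_mk.mp (by exact h1)
      have hqnP : ¬∃ j, P j = (q : Fin n) := by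
        rintro ⟨j, hj⟩
        exact (Finset.mem_compl.mp q.2) (hj ▸ Finset.mem_image_of_mem P (Finset.mem_univ j))
      have hfq : f (q : Fin n) = v := by
        rw [hfnP _ hqnP]
        have h3 : (⟨(q : Fin n), hmemP _ hqnP⟩ : {x // x ∈ Psetᶜ}) = q := Subtype.ext rfl
        rw [h3, hq, pIso.symm_apply_apply, hm, sIso.apply_symm_apply]
      exact hv q hqp (by rw [hπf]; exact hfq)
  -- LRmax specification
  have hSpec : IsLRmaxSpec π P M := by
    refine ⟨hP, ?_, fun i => hfP i⟩
    intro p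
    constructor
    · intro hlr
      by_contra hp
      obtain ⟨i, hi, hmax⟩ := hexmax p hp
      have h1 := hlr (P i) hi
      rw [hπf, hπf, hfP] at h1
      exact absurd (hbound p hp i hi hmax) (not_le.mpr h1)
    · rintro ⟨i, rfl⟩
      intro q hq
      rw [hπf, hπf, hfP]
      by_cases hq' : ∃ j, P j = q
      · obtain ⟨j, rfl⟩ := hq'
        rw [hfP]
        exact hM (hP.lt_iff_lt.mp hq)
      · obtain ⟨i', hi', hmax'⟩ := hexmax q hq'
        exact lt_of_le_of_lt (hbound q hq' i' hi' hmax')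
          (hM (hP.lt_iff_lt.mp (lt_trans hi' hq)))
  refine ⟨⟨π, hMF, fun π' h' => huniq π' π h' hMF⟩, ?_⟩
  intro π' h'
  rw [huniq π' π h' hMF]
  exact hSpec
end
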